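/- arXiv:1512.00080 — 8 statements merged into one kernel-verified Lean document; each statement's English description precedes it below -/
import Mathlib

section
/- For every natural number n, the alternating sum of cubes of binomial coefficients satisfies: ∑_{s=0}^{n} (-1)^s (binom(n,s))^3 = 0 if n is odd, and ∑_{s=0}^{n} (-1)^s (binom(n,s))^3 = (-1)^{n/2} · (3n/2)! / ((n/2)!)^3 if n is even. -/
/-!
For odd `n` the sum vanishes, since `s ↦ n - s` reverses the sign of every term. For `n = 2m`,
reindexing by `k = s - m` turns it into `(-1)^m` times the diagonal case `a = b = c = m` of
Dixon's three-parameter identity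
`∑ₖ (-1)^k C(a+b, a+k) C(b+c, b+k) C(c+a, c+k) = C(a+b+c, a) C(b+c, b) = (a+b+c)! / (a! b! c!)`,
`k` ranging over all integers. That identity is proved by the Wilf–Zeilberger method: the summand
`F a k` and the certificate `G a k` (`dixonCert`, as found by Zeilberger's algorithm) satisfy
`2 (c+a+1) ((a+1) F (a+1) k - (a+b+c+1) F a k) = G a (k+1) - G a k`,
so summing over `k` telescopes to the recurrence `(a+1) S (a+1) = (a+b+c+1) S a`, which
`C(a+b+c, a) C(b+c, b)` shares; both equal `C(b+c, b)` at `a = 0`.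
-/

open Finset
open scoped Nat

namespace Dixon

def zchoose (m : ℕ) (i : ℤ) : ℚ := if 0 ≤ i then (m.choose i.toNat : ℚ) else 0

@[simp] theorem zchoose_natCast (m j : ℕ) : zchoose m j = m.choose j := by
  simp [zchoose]

theorem zchoose_of_neg {m : ℕ} {i : ℤ} (h : i < 0) : zchoose m i = 0 := by
  simp [zchoose, h.not_ge]

theorem zchoose_of_lt {m : ℕ} {i : ℤ} (h : (m : ℤ) < i) : zchoose m i = 0 := by
  lift i to ℕ using by omega
  rw [zchoose_natCast, Nat.choose_eq_zero_of_lt (by omega), Nat.cast_zero]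

theorem zchoose_succ_add_one (m : ℕ) (i : ℤ) :
    zchoose (m + 1) (i + 1) = zchoose m (i + 1) + zchoose m i := by
  rcases lt_or_ge i 0 with h | h
  · obtain rfl | h' := (show i ≤ -1 by omega).eq_or_lt
    · simp [zchoose]
    · simp [zchoose_of_neg, h, show i + 1 < 0 by omega]
  · lift i to ℕ using h
    rw [← Nat.cast_succ, zchoose_natCast, zchoose_natCast, zchoose_natCast,
      Nat.choose_succ_succ', Nat.cast_add, add_comm]

theorem add_one_mul_zchoose_add_one (m : ℕ) (i : ℤ) :
    ((i : ℚ) + 1) * zchoose m (i + 1) = ((m : ℚ) - i) * zchoose m i := by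
  rcases lt_or_ge i 0 with h | h
  · obtain rfl | h' := (show i ≤ -1 by omega).eq_or_lt
    · simp [zchoose_of_neg]
    · simp [zchoose_of_neg, h, show i + 1 < 0 by omega]
  · lift i to ℕ using h
    rw [← Nat.cast_succ, zchoose_natCast, zchoose_natCast]
    rcases lt_or_ge i m with hi | hi
    · have h := Nat.choose_succ_right_eq m i
      rw [← Nat.cast_inj (R := ℚ)] at h
      push_cast [Nat.cast_sub hi.le] at h
      linear_combination h
    · rw [Nat.choose_eq_zero_of_lt (by omega : m < i + 1)]
      obtain rfl | hi := hi.eq_or_lt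
      · simp
      · simp [Nat.choose_eq_zero_of_lt hi]

theorem sub_mul_zchoose_succ (m : ℕ) (i : ℤ) :
    ((m : ℚ) + 1 - i) * zchoose (m + 1) i = ((m : ℚ) + 1) * zchoose m i := by
  have pascal := zchoose_succ_add_one m (i - 1)
  have absorb := add_one_mul_zchoose_add_one m (i - 1)
  rw [sub_add_cancel] at pascal absorb
  push_cast at absorb
  rw [pascal]
  linear_combination -absorb

section WZ

variable (a b c : ℕ)

def dixonTerm (k : ℤ) : ℚ :=
  (-1) ^ k * zchoose (a + b) (a + k) * zchoose (b + c) (b + k) * zchoose (c + a) (c + k)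

def dixonCert (k : ℤ) : ℚ :=
  -(-1) ^ k * ((b + k) * (c + k)) * zchoose (a + b) (a + k) * zchoose (b + c) (b + k) *
    zchoose (c + a + 1) (c + k)

theorem dixonTerm_wz (k : ℤ) :
    2 * ((c : ℚ) + a + 1) *
        ((a + 1) * dixonTerm (a + 1) b c k - (a + b + c + 1) * dixonTerm a b c k) =
      dixonCert a b c (k + 1) - dixonCert a b c k := by
  have absorbA := add_one_mul_zchoose_add_one (a + b) (a + k)
  have absorbB := add_one_mul_zchoose_add_one (b + c) (b + k)
  have absorbC := add_one_mul_zchoose_add_one (c + a) (c + k)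
  have absorbC' := sub_mul_zchoose_succ (c + a) (c + k)
  have pascalA := zchoose_succ_add_one (a + b) (a + k)
  have pascalC := zchoose_succ_add_one (c + a) (c + k)
  push_cast at absorbA absorbB absorbC absorbC'
  simp only [dixonTerm, dixonCert, zpow_add_one₀ (show (-1 : ℚ) ≠ 0 by norm_num), Nat.cast_add,
    Nat.cast_one, ← add_assoc, Int.cast_add, Int.cast_one] at pascalA pascalC ⊢
  rw [show a + 1 + b = a + b + 1 by ring, add_right_comm (a : ℤ), pascalA, pascalC]
  linear_combination (-1 : ℚ) ^ k *
    ((2 * (a : ℚ) + c + 2 - k) * zchoose (b + c) (b + k) * zchoose (c + a + 1) (c + k) * absorbA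
      - ((c + k + 1) * (zchoose (c + a) (c + k + 1) + zchoose (c + a) (c + k))
          * zchoose (a + b) (a + k + 1)) * absorbB
      - ((c - k) * zchoose (a + b) (a + k + 1) * zchoose (b + c) (b + k)) * absorbC
      + (2 * (a + b + c + 1) * zchoose (a + b) (a + k) * zchoose (b + c) (b + k)
          + (c - k) * zchoose (a + b) (a + k + 1) * zchoose (b + c) (b + k)) * absorbC')

theorem dixonCert_neg : dixonCert a b c (-b) = 0 := by
  simp [dixonCert]

theorem dixonCert_add_one : dixonCert a b c (c + 1) = 0 := by
  simp [dixonCert, zchoose_of_lt (show ((b + c : ℕ) : ℤ) < b + (c + 1) by omega)]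

end WZ

-- `dixonTerm a b c k` vanishes unless `-b ≤ k ≤ c`, so this is the sum over all `k : ℤ`.
def dixonSum (a b c : ℕ) : ℚ :=
  ∑ j ∈ range (b + c + 1), dixonTerm a b c (j - b)

theorem succ_mul_dixonSum_succ (a b c : ℕ) :
    (a + 1) * dixonSum (a + 1) b c = (a + b + c + 1) * dixonSum a b c := by
  have telescope : 2 * ((c : ℚ) + a + 1) *
      ((a + 1) * dixonSum (a + 1) b c - (a + b + c + 1) * dixonSum a b c) = 0 := by
    calc _ = ∑ j ∈ range (b + c + 1), (dixonCert a b c (j - b + 1) - dixonCert a b c (j - b)) := by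
          simp only [dixonSum, mul_sum, ← sum_sub_distrib, dixonTerm_wz]
      _ = 0 := by
          simp only [sub_add_eq_add_sub, ← Nat.cast_succ]
          rw [sum_range_sub (fun j : ℕ ↦ dixonCert a b c (j - b)),
            show ((b + c + 1 : ℕ) : ℤ) - b = c + 1 by push_cast; ring, Nat.cast_zero, zero_sub,
            dixonCert_add_one, dixonCert_neg, sub_zero]
  have : 2 * ((c : ℚ) + a + 1) ≠ 0 := by positivity
  linear_combination (mul_eq_zero.1 telescope).resolve_left this

theorem dixonSum_zero (b c : ℕ) : dixonSum 0 b c = (b + c).choose b := by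
  rw [dixonSum, sum_eq_single b]
  · simp [dixonTerm, zchoose]
  · intro j _ hj
    rcases lt_or_gt_of_ne hj with hj | hj
    · simp [dixonTerm, zchoose_of_neg (show (j : ℤ) - b < 0 by omega)]
    · simp [dixonTerm, zchoose_of_lt (show (c : ℤ) < c + (j - b) by omega)]
  · simp

theorem dixonSum_eq (a b c : ℕ) : dixonSum a b c = (a + b + c).choose a * (b + c).choose b := by
  induction a with
  | zero => simp [dixonSum_zero]
  | succ a ih =>
    have h := succ_mul_dixonSum_succ a b c
    have hchoose := Nat.add_one_mul_choose_eq (a + b + c) a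
    rw [ih] at h
    rw [show a + 1 + b + c = a + b + c + 1 by ring]
    apply mul_left_cancel₀ (show (a : ℚ) + 1 ≠ 0 by positivity)
    rw [← Nat.cast_inj (R := ℚ)] at hchoose
    push_cast at hchoose ⊢
    linear_combination h + ((b + c).choose b : ℚ) * hchoose

theorem dixonSum_self (m : ℕ) :
    dixonSum m m m = (-1) ^ m * ∑ s ∈ range (2 * m + 1), (-1) ^ s * ((2 * m).choose s : ℚ) ^ 3 := by
  rw [dixonSum, mul_sum, two_mul]
  refine sum_congr rfl fun s _ ↦ ?_
  have sign : (-1 : ℚ) ^ ((s : ℤ) - m) = (-1) ^ m * (-1) ^ s := by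
    rw [zpow_sub₀ (by norm_num), zpow_natCast, zpow_natCast, div_eq_mul_inv, ← inv_pow, inv_neg_one,
      mul_comm]
  simp only [dixonTerm, sign, add_sub_cancel, zchoose_natCast]
  ring

theorem sum_range_neg_one_pow_mul_choose_two_mul_pow_three (m : ℕ) :
    ∑ s ∈ range (2 * m + 1), (-1 : ℤ) ^ s * ((2 * m).choose s : ℤ) ^ 3 =
      (-1) ^ m * ((3 * m).choose m * (2 * m).choose m : ℕ) := by
  have h := dixonSum_self m
  rw [dixonSum_eq, show m + m + m = 3 * m by ring, ← two_mul] at h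
  have sq : ((-1 : ℚ) ^ m) ^ 2 = 1 := by rw [← pow_mul, pow_mul']; norm_num
  qify
  linear_combination -(-1 : ℚ) ^ m * h -
    (∑ s ∈ range (2 * m + 1), (-1) ^ s * ((2 * m).choose s : ℚ) ^ 3) * sq

theorem sum_range_neg_one_pow_mul_choose_pow_of_odd {n : ℕ} (hn : Odd n) (r : ℕ) :
    ∑ s ∈ range (n + 1), (-1 : ℤ) ^ s * (n.choose s : ℤ) ^ r = 0 := by
  have reflect := sum_range_reflect (fun s ↦ (-1 : ℤ) ^ s * (n.choose s : ℤ) ^ r) (n + 1)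
  have antisymm : ∀ s ∈ range (n + 1),
      (-1 : ℤ) ^ (n + 1 - 1 - s) * (n.choose (n + 1 - 1 - s) : ℤ) ^ r =
        -((-1) ^ s * n.choose s ^ r) := by
    intro s hs
    have hsn : s ≤ n := Nat.lt_succ_iff.1 (mem_range.1 hs)
    have odd : (-1 : ℤ) ^ (n - s) * (-1) ^ s = -1 := by
      rw [← pow_add, Nat.sub_add_cancel hsn, hn.neg_one_pow]
    have sq : (-1 : ℤ) ^ s * (-1) ^ s = 1 := by rw [← mul_pow]; norm_num
    rw [Nat.add_sub_cancel, Nat.choose_symm hsn]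
    linear_combination (n.choose s : ℤ) ^ r * ((-1) ^ s * odd - (-1) ^ (n - s) * sq)
  rw [sum_congr rfl antisymm, sum_neg_distrib] at reflect
  linarith

theorem factorial_three_mul_div_factorial_pow_three (m : ℕ) :
    (3 * m)! / m ! ^ 3 = (3 * m).choose m * (2 * m).choose m := by
  refine Nat.div_eq_of_eq_mul_left (by positivity) ?_
  have h3 := Nat.add_choose_mul_factorial_mul_factorial (2 * m) m
  have h2 := Nat.add_choose_mul_factorial_mul_factorial m m
  rw [show 2 * m + m = 3 * m by ring] at h3
  rw [← two_mul] at h2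
  rw [← h3, ← h2]
  ring

end Dixon

/-- **Dixon's identity.** The alternating sum of cubes of binomial coefficients. -/
theorem dixon_identity (n : ℕ) :
    (∑ s ∈ Finset.range (n + 1), (-1 : ℤ) ^ s * (n.choose s : ℤ) ^ 3) =
      if Odd n then 0
      else (-1 : ℤ) ^ (n / 2) * ((3 * n / 2).factorial / ((n / 2).factorial) ^ 3 : ℕ) := by
  rcases Nat.even_or_odd' n with ⟨m, rfl | rfl⟩
  · rw [if_neg (Nat.not_odd_iff_even.2 (even_two_mul m)), show 3 * (2 * m) / 2 = 3 * m by omega,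
      show 2 * m / 2 = m by omega, Dixon.factorial_three_mul_div_factorial_pow_three]
    exact Dixon.sum_range_neg_one_pow_mul_choose_two_mul_pow_three m
  · rw [if_pos (odd_two_mul_add_one m)]
    exact Dixon.sum_range_neg_one_pow_mul_choose_pow_of_odd (odd_two_mul_add_one m) 3
end

section
/- Let n1, n2, n3 be nonnegative integers and let N = n1 + n2 + n3. Then ∑_{s} (-1)^s · binom(n3, s) · binom(n2, n1 - s) · binom(n1, n2 - n3 + s), where the sum ranges over all integers s with max(0, n1 - n2, n3 - n2) ≤ s ≤ min(n1, n3, n1 + n3 - n2), equals 0 if N is odd, and equals (-1)^{N/2 - n2} · (N/2)! / ((N/2 - n1)! · (N/2 - n2)! · (N/2 - n3)!) if N is even (with the convention that the right-hand side is 0 when N/2 < max(n1, n2, n3)). -/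
/-- Binomial coefficient with integer lower index (0 for negative index). -/
def Bz (n : ℕ) (k : ℤ) : ℤ := if 0 ≤ k then (n.choose k.toNat : ℤ) else 0

@[simp] lemma Bz_natCast (n k : ℕ) : Bz n (k : ℤ) = (n.choose k : ℤ) := by
  simp [Bz]

lemma Bz_neg {n : ℕ} {k : ℤ} (h : k < 0) : Bz n k = 0 := by
  simp [Bz, not_le.2 h]

lemma Bz_zero_of_lt {n : ℕ} {k : ℤ} (h : (n : ℤ) < k) : Bz n k = 0 := by
  have h0 : 0 ≤ k := le_of_lt (lt_of_le_of_lt (Int.ofNat_nonneg n) h)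
  have : n < k.toNat := by omega
  simp [Bz, h0, Nat.choose_eq_zero_of_lt this]

lemma Bz_succ (n : ℕ) (k : ℤ) : Bz (n + 1) k = Bz n k + Bz n (k - 1) := by
  rcases lt_or_ge k 0 with h | h
  · rw [Bz_neg h, Bz_neg h, Bz_neg (by omega)]; ring
  · obtain ⟨j, rfl⟩ := Int.eq_ofNat_of_zero_le h
    cases j with
    | zero => simp [Bz]
    | succ j =>
      have h1 : ((j : ℤ) + 1) - 1 = (j : ℤ) := by ring
      have h2 : ((j + 1 : ℕ) : ℤ) = (j : ℤ) + 1 := by push_cast; ring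
      rw [h2, h1, show ((j:ℤ)+1) = ((j+1 : ℕ) : ℤ) by push_cast; ring]
      rw [Bz_natCast, Bz_natCast, Bz_natCast, Nat.choose_succ_succ]
      push_cast; ring

lemma Bz_zero_left (k : ℤ) : Bz 0 k = if k = 0 then 1 else 0 := by
  rcases lt_or_ge k 0 with h | h
  · rw [Bz_neg h, if_neg (by omega)]
  · obtain ⟨j, rfl⟩ := Int.eq_ofNat_of_zero_le h
    cases j with
    | zero => simp [Bz]
    | succ j =>
      rw [Bz_natCast, Nat.choose_zero_succ, if_neg (by push_cast; omega)]
      simp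

def Fz (n1 n2 n3 : ℕ) (s : ℕ) : ℤ :=
  (-1) ^ s * Bz n3 (s : ℤ) * Bz n2 ((n1 : ℤ) - s) * Bz n1 ((n2 : ℤ) - n3 + s)

def Tz (n1 n2 n3 : ℕ) : ℤ := ∑ s ∈ Finset.range (n3 + 1), Fz n1 n2 n3 s

def gz (a b c : ℕ) (s : ℕ) : ℤ :=
  -(-1) ^ s * Bz c ((s : ℤ) - 1) *
    (Bz (b + 1) ((a : ℤ) + 1 - s) * Bz a ((b : ℤ) - c + s) +
     Bz b ((a : ℤ) + 1 - s) * Bz (a + 1) ((b : ℤ) - c + s) -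
     Bz b ((a : ℤ) + 1 - s) * Bz a ((b : ℤ) - c + s))

lemma cert (a b c s : ℕ) :
    Fz (a+1) (b+1) (c+1) s - Fz (a+1) b c s - Fz a b (c+1) s + Fz a (b+1) c s =
      gz a b c (s+1) - gz a b c s := by
  simp only [Fz, gz, Bz_succ]
  push_cast
  ring_nf

lemma Fz_zero_of_gt {n1 n2 n3 s : ℕ} (h : n3 < s) : Fz n1 n2 n3 s = 0 := by
  unfold Fz
  rw [Bz_natCast, Nat.choose_eq_zero_of_lt h]
  ring

lemma sum_Fz (n1 n2 n3 K : ℕ) (h : n3 ≤ K) :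
    ∑ s ∈ Finset.range (K + 1), Fz n1 n2 n3 s = Tz n1 n2 n3 := by
  rw [Tz]
  symm
  apply Finset.sum_subset
  · intro x hx
    simp only [Finset.mem_range] at *
    omega
  · intro x _ hx
    simp only [Finset.mem_range] at hx
    exact Fz_zero_of_gt (by omega)

lemma Tz_rec (a b c : ℕ) :
    Tz (a+1) (b+1) (c+1) = Tz (a+1) b c + Tz a b (c+1) - Tz a (b+1) c := by
  have key : ∑ s ∈ Finset.range (c + 2),
      (Fz (a+1) (b+1) (c+1) s - Fz (a+1) b c s - Fz a b (c+1) s + Fz a (b+1) c s)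
      = gz a b c (c+2) - gz a b c 0 := by
    rw [Finset.sum_congr rfl (fun s _ => cert a b c s)]
    exact Finset.sum_range_sub (gz a b c) (c + 2)
  have hg0 : gz a b c 0 = 0 := by
    unfold gz
    rw [Bz_neg (by norm_num : ((0:ℕ):ℤ) - 1 < 0)]
    ring
  have hgK : gz a b c (c + 2) = 0 := by
    unfold gz
    rw [Bz_zero_of_lt (by push_cast; omega : (c:ℤ) < ((c+2:ℕ):ℤ) - 1)]
    ring
  rw [hg0, hgK, sub_zero] at key
  simp only [Finset.sum_add_distrib, Finset.sum_sub_distrib] at key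
  have e1 : ∑ s ∈ Finset.range (c + 2), Fz (a+1) (b+1) (c+1) s = Tz (a+1) (b+1) (c+1) :=
    sum_Fz _ _ _ _ (by omega)
  have e2 : ∑ s ∈ Finset.range (c + 2), Fz (a+1) b c s = Tz (a+1) b c :=
    sum_Fz _ _ _ _ (by omega)
  have e3 : ∑ s ∈ Finset.range (c + 2), Fz a b (c+1) s = Tz a b (c+1) :=
    sum_Fz _ _ _ _ (by omega)
  have e4 : ∑ s ∈ Finset.range (c + 2), Fz a (b+1) c s = Tz a (b+1) c :=
    sum_Fz _ _ _ _ (by omega)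
  rw [e1, e2, e3, e4] at key
  linarith

def Mn (x y z : ℕ) : ℕ := (x + y + z).choose x * (y + z).choose y

def Mz (x y z : ℤ) : ℤ :=
  if 0 ≤ x ∧ 0 ≤ y ∧ 0 ≤ z then (Mn x.toNat y.toNat z.toNat : ℤ) else 0

@[simp] lemma Mz_natCast (p q r : ℕ) : Mz (p : ℤ) (q : ℤ) (r : ℤ) = (Mn p q r : ℤ) := by
  simp [Mz]

lemma Mz_zero {x y z : ℤ} (h : x < 0 ∨ y < 0 ∨ z < 0) : Mz x y z = 0 := by
  unfold Mz
  rw [if_neg (by omega)]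

lemma Mz_sub_left (p q r : ℕ) :
    Mz ((p:ℤ) - 1) (q:ℤ) (r:ℤ) = if p = 0 then 0 else (Mn (p-1) q r : ℤ) := by
  cases p with
  | zero => rw [if_pos rfl]; exact Mz_zero (Or.inl (by norm_num))
  | succ p =>
      rw [if_neg (by omega), show ((p+1:ℕ):ℤ) - 1 = ((p:ℕ):ℤ) by push_cast; ring,
        Mz_natCast, show p + 1 - 1 = p from rfl]

lemma Mz_sub_mid (p q r : ℕ) :
    Mz (p:ℤ) ((q:ℤ) - 1) (r:ℤ) = if q = 0 then 0 else (Mn p (q-1) r : ℤ) := by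
  cases q with
  | zero => rw [if_pos rfl]; exact Mz_zero (Or.inr (Or.inl (by norm_num)))
  | succ q =>
      rw [if_neg (by omega), show ((q+1:ℕ):ℤ) - 1 = ((q:ℕ):ℤ) by push_cast; ring,
        Mz_natCast, show q + 1 - 1 = q from rfl]

lemma Mz_sub_right (p q r : ℕ) :
    Mz (p:ℤ) (q:ℤ) ((r:ℤ) - 1) = if r = 0 then 0 else (Mn p q (r-1) : ℤ) := by
  cases r with
  | zero => rw [if_pos rfl]; exact Mz_zero (Or.inr (Or.inr (by norm_num)))
  | succ r =>
      rw [if_neg (by omega), show ((r+1:ℕ):ℤ) - 1 = ((r:ℕ):ℤ) by push_cast; ring,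
        Mz_natCast, show r + 1 - 1 = r from rfl]

lemma Mn_rec (p q r : ℕ) :
    Mn (p+1) (q+1) (r+1) = Mn p (q+1) (r+1) + Mn (p+1) q (r+1) + Mn (p+1) (q+1) r := by
  unfold Mn
  have h1 : p+1+(q+1)+(r+1) = (p+q+r+2)+1 := by ring
  have h2 : p+(q+1)+(r+1) = p+q+r+2 := by ring
  have h3 : p+1+q+(r+1) = p+q+r+2 := by ring
  have h4 : p+1+(q+1)+r = p+q+r+2 := by ring
  have h5 : q+1+(r+1) = (q+r+1)+1 := by ring
  have h6 : q+(r+1) = q+r+1 := by ring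
  have h7 : q+1+r = q+r+1 := by ring
  rw [h1, h2, h3, h4, h5, h6, h7, Nat.choose_succ_succ (p+q+r+2) p,
    Nat.choose_succ_succ (q+r+1) q]
  ring

lemma Mn_rec_x0 (q r : ℕ) : Mn 0 (q+1) (r+1) = Mn 0 q (r+1) + Mn 0 (q+1) r := by
  unfold Mn
  have h5 : 0+(q+1)+(r+1) = (q+r+1)+1 := by ring
  have h5' : q+1+(r+1) = (q+r+1)+1 := by ring
  have h6 : 0+q+(r+1) = q+r+1 := by ring
  have h6' : q+(r+1) = q+r+1 := by ring
  have h7 : 0+(q+1)+r = q+r+1 := by ring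
  have h7' : q+1+r = q+r+1 := by ring
  rw [h5, h5', h6, h6', h7, h7', Nat.choose_succ_succ (q+r+1) q]
  simp [Nat.choose_zero_right]

lemma Mn_rec_y0 (p r : ℕ) : Mn (p+1) 0 (r+1) = Mn p 0 (r+1) + Mn (p+1) 0 r := by
  unfold Mn
  have h1 : p+1+0+(r+1) = (p+r+1)+1 := by ring
  have h2 : p+0+(r+1) = p+r+1 := by ring
  have h3 : p+1+0+r = p+r+1 := by ring
  rw [h1, h2, h3, Nat.choose_succ_succ (p+r+1) p]
  simp [Nat.choose_zero_right]

lemma Mn_rec_z0 (p q : ℕ) : Mn (p+1) (q+1) 0 = Mn p (q+1) 0 + Mn (p+1) q 0 := by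
  unfold Mn
  have h1 : p+1+(q+1)+0 = (p+q+1)+1 := by ring
  have h2 : p+(q+1)+0 = p+q+1 := by ring
  have h3 : p+1+q+0 = p+q+1 := by ring
  rw [h1, h2, h3, Nat.choose_succ_succ (p+q+1) p]
  simp [Nat.choose_self]

@[simp] lemma Mn_00 (r : ℕ) : Mn 0 0 r = 1 := by simp [Mn]
@[simp] lemma Mn_0r0 (q : ℕ) : Mn 0 q 0 = 1 := by simp [Mn, Nat.choose_self]
@[simp] lemma Mn_r00 (p : ℕ) : Mn p 0 0 = 1 := by simp [Mn, Nat.choose_self]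

lemma Mz_rec (x y z : ℤ) (h : 1 ≤ x + y + z) :
    Mz x y z = Mz (x-1) y z + Mz x (y-1) z + Mz x y (z-1) := by
  rcases lt_or_ge x 0 with hx | hx
  · rw [Mz_zero (Or.inl hx), Mz_zero (Or.inl (by omega : x - 1 < 0)),
      Mz_zero (Or.inl hx), Mz_zero (Or.inl hx)]
    ring
  rcases lt_or_ge y 0 with hy | hy
  · rw [Mz_zero (Or.inr (Or.inl hy)), Mz_zero (Or.inr (Or.inl hy)),
      Mz_zero (Or.inr (Or.inl (by omega : y - 1 < 0))), Mz_zero (Or.inr (Or.inl hy))]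
    ring
  rcases lt_or_ge z 0 with hz | hz
  · rw [Mz_zero (Or.inr (Or.inr hz)), Mz_zero (Or.inr (Or.inr hz)),
      Mz_zero (Or.inr (Or.inr hz)), Mz_zero (Or.inr (Or.inr (by omega : z - 1 < 0)))]
    ring
  obtain ⟨p, rfl⟩ := Int.eq_ofNat_of_zero_le hx
  obtain ⟨q, rfl⟩ := Int.eq_ofNat_of_zero_le hy
  obtain ⟨r, rfl⟩ := Int.eq_ofNat_of_zero_le hz
  rw [Mz_natCast, Mz_sub_left, Mz_sub_mid, Mz_sub_right]
  have hpqr : 1 ≤ p + q + r := by omega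
  by_cases h1 : p = 0 <;> by_cases h2 : q = 0 <;> by_cases h3 : r = 0
  · omega
  · subst h1; subst h2
    simp [h3]
  · subst h1; subst h3
    simp [h2]
  · subst h1
    obtain ⟨q', rfl⟩ : ∃ q', q = q' + 1 := ⟨q - 1, by omega⟩
    obtain ⟨r', rfl⟩ : ∃ r', r = r' + 1 := ⟨r - 1, by omega⟩
    simp only [if_true, eq_self_iff_true, if_pos rfl, if_neg h2, if_neg h3, Nat.add_sub_cancel]
    rw [show (0:ℤ) + ↑(Mn 0 q' (r'+1)) + ↑(Mn 0 (q'+1) r') =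
      ((Mn 0 q' (r'+1) + Mn 0 (q'+1) r' : ℕ) : ℤ) by push_cast; ring]
    exact_mod_cast Mn_rec_x0 q' r'
  · subst h2; subst h3
    simp [h1]
  · subst h2
    obtain ⟨p', rfl⟩ : ∃ p', p = p' + 1 := ⟨p - 1, by omega⟩
    obtain ⟨r', rfl⟩ : ∃ r', r = r' + 1 := ⟨r - 1, by omega⟩
    simp only [if_true, eq_self_iff_true, if_pos rfl, if_neg h1, if_neg h3, Nat.add_sub_cancel]
    rw [show ↑(Mn p' 0 (r'+1)) + (0:ℤ) + ↑(Mn (p'+1) 0 r') =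
      ((Mn p' 0 (r'+1) + Mn (p'+1) 0 r' : ℕ) : ℤ) by push_cast; ring]
    exact_mod_cast Mn_rec_y0 p' r'
  · subst h3
    obtain ⟨p', rfl⟩ : ∃ p', p = p' + 1 := ⟨p - 1, by omega⟩
    obtain ⟨q', rfl⟩ : ∃ q', q = q' + 1 := ⟨q - 1, by omega⟩
    simp only [if_true, eq_self_iff_true, if_pos rfl, if_neg h1, if_neg h2, Nat.add_sub_cancel]
    rw [show ↑(Mn p' (q'+1) 0) + ↑(Mn (p'+1) q' 0) + (0:ℤ) =
      ((Mn p' (q'+1) 0 + Mn (p'+1) q' 0 : ℕ) : ℤ) by push_cast; ring]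
    exact_mod_cast Mn_rec_z0 p' q'
  · obtain ⟨p', rfl⟩ : ∃ p', p = p' + 1 := ⟨p - 1, by omega⟩
    obtain ⟨q', rfl⟩ : ∃ q', q = q' + 1 := ⟨q - 1, by omega⟩
    obtain ⟨r', rfl⟩ : ∃ r', r = r' + 1 := ⟨r - 1, by omega⟩
    simp only [if_neg h1, if_neg h2, if_neg h3, Nat.add_sub_cancel]
    rw [show (↑(Mn p' (q'+1) (r'+1)) + ↑(Mn (p'+1) q' (r'+1)) + ↑(Mn (p'+1) (q'+1) r') : ℤ) =
      ((Mn p' (q'+1) (r'+1) + Mn (p'+1) q' (r'+1) + Mn (p'+1) (q'+1) r' : ℕ) : ℤ) by push_cast; ring]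
    exact_mod_cast Mn_rec p' q' r'

def Rc (n1 n2 n3 : ℕ) : ℤ :=
  if Odd (n1 + n2 + n3) then 0
  else (-1) ^ ((n1 + n2 + n3) / 2 + n2) *
    Mz ((((n1 + n2 + n3) / 2 : ℕ) : ℤ) - n1) ((((n1 + n2 + n3) / 2 : ℕ) : ℤ) - n2)
      ((((n1 + n2 + n3) / 2 : ℕ) : ℤ) - n3)

lemma Rc_rec (a b c : ℕ) :
    Rc (a+1) (b+1) (c+1) = Rc (a+1) b c + Rc a b (c+1) - Rc a (b+1) c := by
  by_cases hodd : Odd (a + b + c + 1)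
  · have o1 : Odd (a + 1 + (b + 1) + (c + 1)) := by
      rw [Nat.odd_iff] at *; omega
    have o2 : Odd (a + 1 + b + c) := by rw [Nat.odd_iff] at *; omega
    have o3 : Odd (a + b + (c + 1)) := by rw [Nat.odd_iff] at *; omega
    have o4 : Odd (a + (b + 1) + c) := by rw [Nat.odd_iff] at *; omega
    rw [Rc, Rc, Rc, Rc, if_pos o1, if_pos o2, if_pos o3, if_pos o4]
    ring
  · obtain ⟨k, hk⟩ : ∃ k, a + b + c + 1 = 2 * k := by
      rw [Nat.odd_iff] at hodd; exact ⟨(a+b+c+1)/2, by omega⟩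
    have o1 : ¬ Odd (a + 1 + (b + 1) + (c + 1)) := by rw [Nat.odd_iff] at *; omega
    have o2 : ¬ Odd (a + 1 + b + c) := by rw [Nat.odd_iff] at *; omega
    have o3 : ¬ Odd (a + b + (c + 1)) := by rw [Nat.odd_iff] at *; omega
    have o4 : ¬ Odd (a + (b + 1) + c) := by rw [Nat.odd_iff] at *; omega
    rw [Rc, Rc, Rc, Rc, if_neg o1, if_neg o2, if_neg o3, if_neg o4]
    have d1 : (a + 1 + (b + 1) + (c + 1)) / 2 = k + 1 := by omega
    have d2 : (a + 1 + b + c) / 2 = k := by omega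
    have d3 : (a + b + (c + 1)) / 2 = k := by omega
    have d4 : (a + (b + 1) + c) / 2 = k := by omega
    rw [d1, d2, d3, d4]
    have hX : 1 ≤ ((k:ℤ) - a) + ((k:ℤ) - b) + ((k:ℤ) - c) := by omega
    have hrec := Mz_rec ((k:ℤ) - a) ((k:ℤ) - b) ((k:ℤ) - c) hX
    have e1 : (((k+1:ℕ)):ℤ) - ((a+1:ℕ):ℤ) = (k:ℤ) - a := by push_cast; ring
    have e2 : (((k+1:ℕ)):ℤ) - ((b+1:ℕ):ℤ) = (k:ℤ) - b := by push_cast; ring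
    have e3 : (((k+1:ℕ)):ℤ) - ((c+1:ℕ):ℤ) = (k:ℤ) - c := by push_cast; ring
    have e4 : ((k:ℕ):ℤ) - ((a+1:ℕ):ℤ) = (k:ℤ) - a - 1 := by push_cast; ring
    have e5 : ((k:ℕ):ℤ) - ((c+1:ℕ):ℤ) = (k:ℤ) - c - 1 := by push_cast; ring
    have e6 : ((k:ℕ):ℤ) - ((b+1:ℕ):ℤ) = (k:ℤ) - b - 1 := by push_cast; ring
    rw [e1, e2, e3, e4, e5, e6]
    have s1 : (-1 : ℤ) ^ (k + 1 + (b + 1)) = (-1) ^ (k + b) := by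
      rw [show k + 1 + (b + 1) = (k + b) + 2 by ring, pow_add]; norm_num
    have s2 : (-1 : ℤ) ^ (k + (b + 1)) = -(-1) ^ (k + b) := by
      rw [show k + (b + 1) = (k + b) + 1 by ring, pow_add]; norm_num
    rw [s1, s2]
    rw [hrec]
    ring

lemma base_n3 (n1 n2 : ℕ) : Tz n1 n2 0 = Rc n1 n2 0 := by
  have hT : Tz n1 n2 0 = (n2.choose n1 : ℤ) * (n1.choose n2 : ℤ) := by
    rw [Tz, Finset.sum_range_one, Fz]
    rw [show ((n1:ℤ) - ((0:ℕ):ℤ)) = ((n1:ℕ):ℤ) by push_cast; ring,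
      show ((n2:ℤ) - ((0:ℕ):ℤ) + ((0:ℕ):ℤ)) = ((n2:ℕ):ℤ) by push_cast; ring,
      Bz_natCast, Bz_natCast, Bz_natCast]
    simp
  rw [hT, Rc]
  by_cases h : n1 = n2
  · subst h
    rw [if_neg (by rw [Nat.odd_iff]; omega)]
    rw [show (n1 + n1 + 0)/2 = n1 by omega]
    rw [show ((n1:ℤ) - n1) = ((0:ℕ):ℤ) by push_cast; ring,
      show ((n1:ℤ) - ((0:ℕ):ℤ)) = ((n1:ℕ):ℤ) by push_cast; ring]
    rw [Mz_natCast]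
    rw [show n1 + n1 = 2*n1 by ring, pow_mul]
    simp [Nat.choose_self]
  · have hL : (n2.choose n1 : ℤ) * (n1.choose n2 : ℤ) = 0 := by
      rcases Nat.lt_or_ge n1 n2 with hlt | hge
      · rw [Nat.choose_eq_zero_of_lt hlt]; push_cast; ring
      · rw [Nat.choose_eq_zero_of_lt (by omega)]; push_cast; ring
    rw [hL]
    by_cases ho : Odd (n1 + n2 + 0)
    · rw [if_pos ho]
    · rw [if_neg ho]
      rw [Nat.odd_iff] at ho
      have hz : Mz ((((n1+n2+0)/2 : ℕ) : ℤ) - n1) ((((n1+n2+0)/2 : ℕ) : ℤ) - n2)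
          ((((n1+n2+0)/2 : ℕ) : ℤ) - ((0:ℕ):ℤ)) = 0 := Mz_zero (by omega)
      rw [hz]
      ring

lemma base_n2 (n1 n3 : ℕ) : Tz n1 0 n3 = Rc n1 0 n3 := by
  by_cases h : n1 = n3
  · subst h
    have hT : Tz n1 0 n1 = (-1) ^ n1 := by
      rw [Tz]
      rw [Finset.sum_eq_single_of_mem n1 (by simp)]
      · rw [Fz]
        rw [show ((n1:ℤ) - n1) = ((0:ℕ):ℤ) by push_cast; ring,
          show ((0:ℕ):ℤ) - n1 + n1 = ((0:ℕ):ℤ) by push_cast; ring,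
          Bz_natCast, Bz_natCast, Bz_natCast]
        simp [Nat.choose_self]
      · intro s _ hs
        rw [Fz, Bz_zero_left, if_neg (by omega)]
        ring
    rw [hT, Rc, if_neg (by rw [Nat.odd_iff]; omega)]
    rw [show (n1 + 0 + n1)/2 = n1 by omega]
    rw [show ((n1:ℤ) - n1) = ((0:ℕ):ℤ) by push_cast; ring,
      show ((n1:ℤ) - ((0:ℕ):ℤ)) = ((n1:ℕ):ℤ) by push_cast; ring]
    rw [Mz_natCast]
    simp [Mn, Nat.choose_self]
  · have hT : Tz n1 0 n3 = 0 := by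
      rw [Tz]
      apply Finset.sum_eq_zero
      intro s hs
      simp only [Finset.mem_range] at hs
      by_cases hsn : s = n1
      · subst hsn
        rw [Fz, Bz_neg (by push_cast; omega : ((0:ℕ):ℤ) - n3 + s < 0)]
        ring
      · rw [Fz, Bz_zero_left, if_neg (by omega)]
        ring
    rw [hT, Rc]
    by_cases ho : Odd (n1 + 0 + n3)
    · rw [if_pos ho]
    · rw [if_neg ho]
      rw [Nat.odd_iff] at ho
      have hz : Mz ((((n1+0+n3)/2 : ℕ) : ℤ) - n1) ((((n1+0+n3)/2 : ℕ) : ℤ) - ((0:ℕ):ℤ))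
          ((((n1+0+n3)/2 : ℕ) : ℤ) - n3) = 0 := Mz_zero (by omega)
      rw [hz]
      ring

lemma base_n1 (n2 n3 : ℕ) : Tz 0 n2 n3 = Rc 0 n2 n3 := by
  have hT : Tz 0 n2 n3 = Bz 0 ((n2:ℤ) - n3) := by
    rw [Tz]
    rw [Finset.sum_eq_single_of_mem 0 (by simp)]
    · rw [Fz]
      rw [show ((0:ℕ):ℤ) - ((0:ℕ):ℤ) = ((0:ℕ):ℤ) by push_cast,
        show ((n2:ℤ) - n3 + ((0:ℕ):ℤ)) = (n2:ℤ) - n3 by push_cast; ring,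
        Bz_natCast, Bz_natCast]
      simp
    · intro s _ hs
      rw [Fz, Bz_neg (by omega : ((0:ℕ):ℤ) - (s:ℕ) < 0)]
      ring
  rw [hT, Rc]
  by_cases h : n2 = n3
  · subst h
    rw [Bz_zero_left, if_pos (by ring), if_neg (by rw [Nat.odd_iff]; omega)]
    rw [show (0 + n2 + n2)/2 = n2 by omega]
    rw [show ((n2:ℤ) - ((0:ℕ):ℤ)) = ((n2:ℕ):ℤ) by push_cast; ring,
      show ((n2:ℤ) - n2) = ((0:ℕ):ℤ) by push_cast; ring]
    rw [Mz_natCast]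
    rw [show n2 + n2 = 2*n2 by ring, pow_mul]
    simp [Mn, Nat.choose_self]
  · rw [Bz_zero_left, if_neg (by omega)]
    by_cases ho : Odd (0 + n2 + n3)
    · rw [if_pos ho]
    · rw [if_neg ho]
      rw [Nat.odd_iff] at ho
      have hz : Mz ((((0+n2+n3)/2 : ℕ) : ℤ) - ((0:ℕ):ℤ)) ((((0+n2+n3)/2 : ℕ) : ℤ) - n2)
          ((((0+n2+n3)/2 : ℕ) : ℤ) - n3) = 0 := Mz_zero (by omega)
      rw [hz]
      ring

lemma Tz_eq_Rc (n1 n2 n3 : ℕ) : Tz n1 n2 n3 = Rc n1 n2 n3 := by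
  suffices H : ∀ N n1 n2 n3 : ℕ, n1 + n2 + n3 = N → Tz n1 n2 n3 = Rc n1 n2 n3 from
    H _ n1 n2 n3 rfl
  intro N
  induction N using Nat.strong_induction_on with
  | _ N ih =>
    intro n1 n2 n3 hN
    cases n1 with
    | zero => exact base_n1 n2 n3
    | succ a =>
      cases n2 with
      | zero => exact base_n2 (a+1) n3
      | succ b =>
        cases n3 with
        | zero => exact base_n3 (a+1) (b+1)
        | succ c =>
          rw [Tz_rec, Rc_rec,
            ih (a+1+b+c) (by omega) (a+1) b c rfl,
            ih (a+b+(c+1)) (by omega) a b (c+1) rfl,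
            ih (a+(b+1)+c) (by omega) a (b+1) c rfl]

lemma Mn_eq_div (x y z : ℕ) :
    (x+y+z).factorial / (x.factorial * y.factorial * z.factorial) = Mn x y z := by
  have h1 := Nat.choose_mul_factorial_mul_factorial (show x ≤ x+y+z by omega)
  have h2 := Nat.choose_mul_factorial_mul_factorial (show y ≤ y+z by omega)
  rw [show x+y+z-x = y+z by omega] at h1
  rw [show y+z-y = z by omega] at h2
  have key : (x+y+z).factorial = Mn x y z * (x.factorial * y.factorial * z.factorial) := by
    rw [← h1, ← h2, Mn]
    ring
  rw [key, Nat.mul_div_cancel _ (by positivity)]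

lemma Mn_eq_div' (m n1 n2 n3 : ℕ) (h1 : n1 ≤ m) (h2 : n2 ≤ m) (h3 : n3 ≤ m)
    (hsum : n1 + n2 + n3 = 2 * m) :
    m.factorial / ((m-n1).factorial * ((m-n2).factorial) * ((m-n3).factorial))
      = Mn (m-n1) (m-n2) (m-n3) := by
  have e : m = (m-n1)+(m-n2)+(m-n3) := by omega
  have := Mn_eq_div (m-n1) (m-n2) (m-n3)
  rw [← e] at this
  exact this

/-- The well-poised ₃F₂ transformation.  Here `n1 - n2`, `n3 - n2`, `n1 + n3 - n2` use
truncated natural subtraction, which realizes the conventions `max(0, ·)` in the lower bound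
(and when `n1 + n3 < n2` the only possible extra term vanishes since its binomial is zero).
The binomial `choose n1 (n2 - n3 + s)` is written `n1.choose (n2 + s - n3)`, which is exact
since `s ≥ n3 - n2` on the summation range. -/
theorem wellPoised_3F2 (n1 n2 n3 : ℕ) :
    (∑ s ∈ Finset.Icc (max (n1 - n2) (n3 - n2)) (min n1 (min n3 (n1 + n3 - n2))),
        (-1 : ℤ) ^ s * (n3.choose s : ℤ) * (n2.choose (n1 - s) : ℤ) *
          (n1.choose (n2 + s - n3) : ℤ)) =
      if Odd (n1 + n2 + n3) then 0
      else if (n1 + n2 + n3) / 2 < max n1 (max n2 n3) then 0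
      else (-1 : ℤ) ^ ((n1 + n2 + n3) / 2 - n2) *
        (((n1 + n2 + n3) / 2).factorial /
          ((((n1 + n2 + n3) / 2 - n1).factorial) * (((n1 + n2 + n3) / 2 - n2).factorial) *
            (((n1 + n2 + n3) / 2 - n3).factorial)) : ℕ) := by
  have hL : (∑ s ∈ Finset.Icc (max (n1 - n2) (n3 - n2)) (min n1 (min n3 (n1 + n3 - n2))),
        (-1 : ℤ) ^ s * (n3.choose s : ℤ) * (n2.choose (n1 - s) : ℤ) *
          (n1.choose (n2 + s - n3) : ℤ)) = Tz n1 n2 n3 := by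
    have step1 : (∑ s ∈ Finset.Icc (max (n1 - n2) (n3 - n2)) (min n1 (min n3 (n1 + n3 - n2))),
        (-1 : ℤ) ^ s * (n3.choose s : ℤ) * (n2.choose (n1 - s) : ℤ) *
          (n1.choose (n2 + s - n3) : ℤ))
        = ∑ s ∈ Finset.Icc (max (n1 - n2) (n3 - n2)) (min n1 (min n3 (n1 + n3 - n2))),
            Fz n1 n2 n3 s := by
      apply Finset.sum_congr rfl
      intro s hs
      simp only [Finset.mem_Icc] at hs
      rw [Fz,
        show ((n1:ℤ) - s) = ((n1 - s : ℕ) : ℤ) by omega,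
        show ((n2:ℤ) - n3 + s) = ((n2 + s - n3 : ℕ) : ℤ) by omega,
        Bz_natCast, Bz_natCast, Bz_natCast]
    rw [step1, Tz]
    apply Finset.sum_subset
    · intro x hx
      simp only [Finset.mem_Icc, Finset.mem_range] at *
      omega
    · intro x hx hx2
      simp only [Finset.mem_Icc, Finset.mem_range] at hx hx2
      have hdisj : ((n1:ℤ) - x < 0) ∨ ((n2:ℤ) - n3 + x < 0) ∨ ((n2:ℤ) < (n1:ℤ) - x)
          ∨ ((n1:ℤ) < (n2:ℤ) - n3 + x) := by omega
      rcases hdisj with hd | hd | hd | hd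
      · rw [Fz, Bz_neg hd]; ring
      · rw [Fz, Bz_neg hd]; ring
      · rw [Fz, Bz_zero_of_lt hd]; ring
      · rw [Fz, Bz_zero_of_lt hd]; ring
  rw [hL, Tz_eq_Rc, Rc]
  by_cases ho : Odd (n1 + n2 + n3)
  · rw [if_pos ho, if_pos ho]
  · rw [if_neg ho, if_neg ho]
    rw [Nat.odd_iff] at ho
    by_cases hm : (n1 + n2 + n3) / 2 < max n1 (max n2 n3)
    · rw [if_pos hm]
      have hz : Mz ((((n1+n2+n3)/2 : ℕ) : ℤ) - n1) ((((n1+n2+n3)/2 : ℕ) : ℤ) - n2)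
          ((((n1+n2+n3)/2 : ℕ) : ℤ) - n3) = 0 := Mz_zero (by omega)
      rw [hz]
      ring
    · rw [if_neg hm]
      have hn1 : n1 ≤ (n1+n2+n3)/2 := by omega
      have hn2 : n2 ≤ (n1+n2+n3)/2 := by omega
      have hn3 : n3 ≤ (n1+n2+n3)/2 := by omega
      rw [show ((((n1+n2+n3)/2 : ℕ) : ℤ) - n1) = (((n1+n2+n3)/2 - n1 : ℕ) : ℤ) by omega,
        show ((((n1+n2+n3)/2 : ℕ) : ℤ) - n2) = (((n1+n2+n3)/2 - n2 : ℕ) : ℤ) by omega,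
        show ((((n1+n2+n3)/2 : ℕ) : ℤ) - n3) = (((n1+n2+n3)/2 - n3 : ℕ) : ℤ) by omega,
        Mz_natCast,
        Mn_eq_div' ((n1+n2+n3)/2) n1 n2 n3 hn1 hn2 hn3 (by omega)]
      have hsign : (-1 : ℤ) ^ ((n1+n2+n3)/2 + n2) = (-1) ^ ((n1+n2+n3)/2 - n2) := by
        rw [show (n1+n2+n3)/2 + n2 = ((n1+n2+n3)/2 - n2) + 2*n2 by omega, pow_add, pow_mul]
        norm_num
      rw [hsign]
end

section
/- For every natural number n, ∑_{k=0}^{n} (-1)^k (binom(n,k))^2 = 0 if n is odd, and ∑_{k=0}^{n} (-1)^k (binom(n,k))^2 = (-1)^{n/2} · binom(n, n/2) if n is even. -/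
open Polynomial Finset

/-- Alternating sum of squares of binomial coefficients. -/
theorem alternating_sum_sq_choose (n : ℕ) :
    (∑ k ∈ Finset.range (n + 1), (-1 : ℤ) ^ k * (n.choose k : ℤ) ^ 2) =
      if Odd n then 0 else (-1 : ℤ) ^ (n / 2) * (n.choose (n / 2) : ℤ) := by
  have key : ((X + 1) ^ n * (X + C (-1 : ℤ)) ^ n).coeff n
      = ∑ k ∈ Finset.range (n + 1), (-1 : ℤ) ^ k * (n.choose k : ℤ) ^ 2 := by
    rw [coeff_mul, Finset.Nat.sum_antidiagonal_eq_sum_range_succ_mk]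
    refine Finset.sum_congr rfl fun k hk => ?_
    rw [Finset.mem_range, Nat.lt_succ_iff] at hk
    rw [coeff_X_add_one_pow, coeff_X_add_C_pow, Nat.sub_sub_self hk,
      Nat.choose_symm hk]
    ring
  have prod_eq : ((X + 1) ^ n * (X + C (-1 : ℤ)) ^ n : ℤ[X])
      = (X ^ 2 + C (-1 : ℤ)) ^ n := by
    rw [← mul_pow]
    congr 1
    simp [C_neg]
    ring
  have key2 : ((X ^ 2 + C (-1 : ℤ)) ^ n).coeff n
      = if Odd n then 0 else (-1 : ℤ) ^ (n / 2) * (n.choose (n / 2) : ℤ) := by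
    rw [add_pow]
    rw [finset_sum_coeff]
    simp only [← pow_mul, ← C_pow, ← C_eq_natCast, ← C_mul, mul_assoc, coeff_mul_C,
      coeff_X_pow]
    by_cases hn : Odd n
    · rw [if_pos hn]
      refine Finset.sum_eq_zero fun i _ => ?_
      rw [if_neg (by rintro rfl; simp [Nat.odd_iff, Nat.mul_mod_right] at hn), zero_mul]
    · rw [if_neg hn]
      rw [Nat.not_odd_iff_even] at hn
      obtain ⟨m, hm⟩ := hn
      have hm2 : n = 2 * m := by omega
      rw [Finset.sum_eq_single m]
      · rw [if_pos hm2, one_mul]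
        have h1 : n - m = n / 2 := by omega
        have h2 : m = n / 2 := by omega
        rw [h1, h2]
      · intro i _ hi
        rw [if_neg (by omega), zero_mul]
      · intro h
        exact absurd (Finset.mem_range.mpr (by omega)) h
  rw [← key, prod_eq, key2]
end

section
/- For all natural numbers p ≥ 1, n ≥ 1 and s, the number of s-element subsets F of {1,…,n}^p that are chains under the strict componentwise order (i.e., for any two distinct elements u, v of F, either every coordinate of u is strictly less than the corresponding coordinate of v, or every coordinate of u is strictly greater) equals binom(n,s)^p. -/
open Finset

namespace CardFacesGammaAux

variable {p n s : ℕ}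

/-- For a chain `F`, each coordinate projection is injective on `F`. -/
lemma proj_injOn {F : Finset (Fin p → ℕ)}
    (hch : ∀ u ∈ F, ∀ v ∈ F, u ≠ v → (∀ a, u a < v a) ∨ (∀ a, v a < u a)) (a : Fin p) :
    Set.InjOn (fun v : Fin p → ℕ => v a) F := by
  intro u hu v hv h
  by_contra hne
  rcases hch u hu v hv hne with h' | h'
  · exact absurd h (h' a).ne
  · exact absurd h (h' a).ne'

lemma img_card {F : Finset (Fin p → ℕ)}
    (hch : ∀ u ∈ F, ∀ v ∈ F, u ≠ v → (∀ a, u a < v a) ∨ (∀ a, v a < u a))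
    (hcard : F.card = s) (a : Fin p) :
    (F.image (fun v => v a)).card = s := by
  rw [Finset.card_image_of_injOn (proj_injOn hch a), hcard]

/-- Key structure lemma: a chain `F` of card `s` equals the set of vectors whose `a`-th
coordinate is the `i`-th smallest element of the `a`-th coordinate image. -/
lemma chain_eq_image (hp : 1 ≤ p) {F : Finset (Fin p → ℕ)}
    (hch : ∀ u ∈ F, ∀ v ∈ F, u ≠ v → (∀ a, u a < v a) ∨ (∀ a, v a < u a))
    (hcard : F.card = s) :
    F = Finset.image
      (fun i : Fin s => fun a : Fin p =>
        (F.image (fun v => v a)).orderEmbOfFin (img_card hch hcard a) i) Finset.univ := by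
  set a0 : Fin p := ⟨0, hp⟩
  set A0 := F.image (fun v => v a0) with hA0
  have h0 : A0.card = s := img_card hch hcard a0
  choose v hvF hv0 using fun i : Fin s =>
    Finset.mem_image.mp (A0.orderEmbOfFin_mem h0 i)
  -- the chosen vectors are strictly increasing in every coordinate
  have hmono : ∀ i j : Fin s, i < j → ∀ a, v i a < v j a := by
    intro i j hij a
    have h00 : v i a0 < v j a0 := by
      rw [hv0 i, hv0 j]; exact (A0.orderEmbOfFin h0).strictMono hij
    have hne : v i ≠ v j := fun h => absurd (congrFun h a0) h00.ne
    rcases hch _ (hvF i) _ (hvF j) hne with h' | h'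
    · exact h' a
    · exact absurd (h' a0) h00.asymm
  have key : ∀ a : Fin p, (fun i : Fin s => v i a)
      = (F.image (fun w => w a)).orderEmbOfFin (img_card hch hcard a) := by
    intro a
    refine Finset.orderEmbOfFin_unique _ (fun i => Finset.mem_image_of_mem _ (hvF i)) ?_
    intro i j hij
    exact hmono i j hij a
  have hpsi : ∀ i : Fin s, (fun a : Fin p =>
      (F.image (fun w => w a)).orderEmbOfFin (img_card hch hcard a) i) = v i := by
    intro i; funext a; rw [← key a]
  have hvinj : Function.Injective v := by
    intro i j h
    have : v i a0 = v j a0 := congrFun h a0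
    rw [hv0 i, hv0 j] at this
    exact (A0.orderEmbOfFin h0).injective this
  have hinj : Set.InjOn (fun i : Fin s => fun a : Fin p =>
      (F.image (fun v => v a)).orderEmbOfFin (img_card hch hcard a) i)
      (Finset.univ : Finset (Fin s)) := by
    intro i _ j _ h
    apply hvinj
    rw [← hpsi i, ← hpsi j]
    exact h
  symm
  apply Finset.eq_of_subset_of_card_le
  · intro x hx
    rcases Finset.mem_image.mp hx with ⟨i, _, rfl⟩
    rw [hpsi i]; exact hvF i
  · rw [hcard]
    calc s = (Finset.univ : Finset (Fin s)).card := by simp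
    _ ≤ _ := Finset.card_le_card_of_injOn _
        (fun i _ => Finset.mem_image_of_mem _ (Finset.mem_univ i)) hinj

end CardFacesGammaAux

/-- The number of `s`-element chains in `{1,…,n}^p` under the strict componentwise order
is `(n.choose s)^p`.  These are the `(s-1)`-dimensional faces of the complex `Γ_p(n)`. -/
theorem card_faces_gamma (p n s : ℕ) (hp : 1 ≤ p) (hn : 1 ≤ n) :
    Nat.card {F : Finset (Fin p → ℕ) //
        (∀ v ∈ F, ∀ a, v a ∈ Finset.Icc 1 n) ∧
        (∀ u ∈ F, ∀ v ∈ F, u ≠ v → (∀ a, u a < v a) ∨ (∀ a, v a < u a)) ∧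
        F.card = s} = (n.choose s) ^ p := by
  classical
  open CardFacesGammaAux in
  set T := ((Finset.Icc 1 n).powersetCard s : Finset (Finset ℕ)) with hT
  have hTmem : ∀ A : Finset ℕ, A ∈ T ↔ A ⊆ Finset.Icc 1 n ∧ A.card = s := by
    intro A; rw [hT, Finset.mem_powersetCard]
  have a0 : Fin p := ⟨0, hp⟩
  -- the equivalence
  have e : {F : Finset (Fin p → ℕ) //
        (∀ v ∈ F, ∀ a, v a ∈ Finset.Icc 1 n) ∧
        (∀ u ∈ F, ∀ v ∈ F, u ≠ v → (∀ a, u a < v a) ∨ (∀ a, v a < u a)) ∧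
        F.card = s} ≃ (Fin p → T) := by
    refine
      { toFun := fun F a => ⟨(F.1.image (fun v => v a)), ?_⟩
        invFun := fun g => ⟨Finset.image
          (fun i : Fin s => fun a : Fin p =>
            (g a).1.orderEmbOfFin (((hTmem _).mp (g a).2).2) i) Finset.univ, ?_, ?_, ?_⟩
        left_inv := ?_
        right_inv := ?_ }
    · -- image is in T
      rw [hTmem]
      refine ⟨?_, CardFacesGammaAux.img_card F.2.2.1 F.2.2.2 a⟩
      intro x hx
      rcases Finset.mem_image.mp hx with ⟨w, hw, rfl⟩
      exact F.2.1 w hw a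
    · -- Icc condition
      intro w hw a
      rcases Finset.mem_image.mp hw with ⟨i, _, rfl⟩
      exact ((hTmem _).mp (g a).2).1 ((g a).1.orderEmbOfFin_mem _ i)
    · -- chain condition
      intro u hu w hw huw
      rcases Finset.mem_image.mp hu with ⟨i, _, rfl⟩
      rcases Finset.mem_image.mp hw with ⟨j, _, rfl⟩
      have hij : i ≠ j := fun h => huw (by rw [h])
      rcases hij.lt_or_gt with h | h
      · exact Or.inl fun a => ((g a).1.orderEmbOfFin _).strictMono h
      · exact Or.inr fun a => ((g a).1.orderEmbOfFin _).strictMono h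
    · -- card condition
      rw [Finset.card_image_of_injective _ ?_, Finset.card_univ, Fintype.card_fin]
      intro i j h
      have := congrFun h a0
      exact ((g a0).1.orderEmbOfFin _).injective this
    · -- left inverse
      rintro ⟨F, h1, h2, h3⟩
      apply Subtype.ext
      simp only
      exact (CardFacesGammaAux.chain_eq_image hp h2 h3).symm
    · -- right inverse
      intro g
      funext a
      apply Subtype.ext
      simp only
      rw [Finset.image_image]
      apply Finset.coe_injective
      rw [Finset.coe_image, Finset.coe_univ, Set.image_univ]
      exact Finset.range_orderEmbOfFin _ _
  rw [Nat.card_congr e, Nat.card_fun, Nat.card_eq_finsetCard, Nat.card_eq_fintype_card,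
    Fintype.card_fin, hT, Finset.card_powersetCard, Nat.card_Icc]
  simp
end

section
/- Let n ≥ 1 and let F be a nonempty finite subset of {1,…,n}^3 that is a chain under the strict componentwise order, with elements listed in increasing order as v_1, …, v_r where v_ℓ = (i_ℓ, j_ℓ, k_ℓ). Then F is a facet (an inclusion-maximal such chain) if and only if the following three conditions hold: (P1) max(i_r, j_r, k_r) = n; (P2) min(i_1, j_1, k_1) = 1; (P3) if r ≥ 2 then for every ℓ with 1 ≤ ℓ ≤ r-1, min(i_{ℓ+1} - i_ℓ, j_{ℓ+1} - j_ℓ, k_{ℓ+1} - k_ℓ) = 1. -/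
/-- Vertices of `Δ(n)`: integer triples. -/
abbrev V : Type := ℕ × ℕ × ℕ

/-- The strict componentwise order on triples. -/
def slt (u v : V) : Prop := u.1 < v.1 ∧ u.2.1 < v.2.1 ∧ u.2.2 < v.2.2

/-- A face of `Δ(n)`: a finite subset of `{1,…,n}³` that is a chain under `slt`. -/
def IsFace (n : ℕ) (F : Finset V) : Prop :=
  (∀ v ∈ F, v.1 ∈ Finset.Icc 1 n ∧ v.2.1 ∈ Finset.Icc 1 n ∧ v.2.2 ∈ Finset.Icc 1 n) ∧
  (∀ u ∈ F, ∀ v ∈ F, u ≠ v → slt u v ∨ slt v u)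

/-- A facet of `Δ(n)`: an inclusion-maximal face. -/
def IsFacet (n : ℕ) (F : Finset V) : Prop :=
  IsFace n F ∧ ∀ G : Finset V, IsFace n G → F ⊆ G → F = G

/-!
A face is a facet exactly when no point of the cube `{1,…,n}³` is comparable with all of its
vertices. Such a point would lie strictly above the top vertex, strictly below the bottom one,
or strictly between two consecutive ones, and these three ways of extending `F` are ruled out
precisely by (P1), (P2) and (P3).
-/

namespace List

variable {α : Type*} {r : α → α → Prop} [IsTrans α r]

theorem IsChain.forall_mem_comparable_iff {L : List α} (hL : L.IsChain r) (hne : L ≠ [])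
    (x : α) :
    (∀ y ∈ L, r y x ∨ r x y) ↔ r (L.getLast hne) x ∨ r x (L.head hne) ∨
      ∃ i, ∃ _ : i + 1 < L.length, r L[i] x ∧ r x L[i + 1] := by
  induction L with
  | nil => exact absurd rfl hne
  | cons a t ih =>
    rcases t with _ | ⟨b, t⟩
    · simp
    · have ha : ∀ y ∈ b :: t, r a y := (pairwise_cons.mp (isChain_iff_pairwise.mp hL)).1
      have hgap_cons :
          (∃ i, ∃ _ : i + 1 < (a :: b :: t).length,
              r (a :: b :: t)[i] x ∧ r x (a :: b :: t)[i + 1]) ↔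
            (r a x ∧ r x b) ∨
              ∃ i, ∃ _ : i + 1 < (b :: t).length, r (b :: t)[i] x ∧ r x (b :: t)[i + 1] := by
        rw [← Nat.or_exists_add_one]
        simp
      rw [forall_mem_cons, ih hL.tail (cons_ne_nil _ _), hgap_cons, getLast_cons_cons, head_cons,
        head_cons]
      constructor
      · rintro ⟨hax | hxa, hlast | hxb | hgap⟩ <;> tauto
      · rintro (hlast | hxa | ⟨hax, hxb⟩ | ⟨i, hi, hgap⟩)
        · exact ⟨.inl (_root_.trans (ha _ (getLast_mem _)) hlast), .inl hlast⟩
        · exact ⟨.inr hxa, .inr (.inl (_root_.trans hxa hL.rel))⟩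
        · exact ⟨.inl hax, .inr (.inl hxb)⟩
        · exact ⟨.inl (_root_.trans (ha _ (getElem_mem _)) hgap.1), .inr (.inr ⟨i, hi, hgap⟩)⟩

end List

def InCube (n : ℕ) (v : V) : Prop :=
  v.1 ∈ Finset.Icc 1 n ∧ v.2.1 ∈ Finset.Icc 1 n ∧ v.2.2 ∈ Finset.Icc 1 n

lemma slt_irrefl (x : V) : ¬ slt x x := fun h => lt_irrefl _ h.1

instance : IsTrans V slt :=
  ⟨fun _ _ _ h₁ h₂ => ⟨h₁.1.trans h₂.1, h₁.2.1.trans h₂.2.1, h₁.2.2.trans h₂.2.2⟩⟩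

variable {n : ℕ}

lemma not_exists_slt_above_iff {w : V} (hw : InCube n w) :
    (¬∃ x, InCube n x ∧ slt w x) ↔ max w.1 (max w.2.1 w.2.2) = n := by
  simp only [InCube, slt, Finset.mem_Icc] at hw ⊢
  constructor
  · intro h
    by_contra hmax
    exact h ⟨(w.1 + 1, w.2.1 + 1, w.2.2 + 1), by dsimp only; omega⟩
  · rintro h ⟨x, hx, hwx⟩
    omega

lemma not_exists_slt_below_iff {w : V} (hw : InCube n w) :
    (¬∃ x, InCube n x ∧ slt x w) ↔ min w.1 (min w.2.1 w.2.2) = 1 := by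
  simp only [InCube, slt, Finset.mem_Icc] at hw ⊢
  constructor
  · intro h
    by_contra hmin
    exact h ⟨(w.1 - 1, w.2.1 - 1, w.2.2 - 1), by dsimp only; omega⟩
  · rintro h ⟨x, hx, hxw⟩
    omega

lemma not_exists_slt_between_iff {u v : V} (huv : slt u v) (hv : InCube n v) :
    (¬∃ x, InCube n x ∧ slt u x ∧ slt x v) ↔
      min (v.1 - u.1) (min (v.2.1 - u.2.1) (v.2.2 - u.2.2)) = 1 := by
  simp only [InCube, slt, Finset.mem_Icc] at huv hv ⊢
  constructor
  · intro h
    by_contra hmin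
    exact h ⟨(u.1 + 1, u.2.1 + 1, u.2.2 + 1), by dsimp only; omega⟩
  · rintro h ⟨x, hx, hux, hxv⟩
    omega

lemma IsFace.insert {F : Finset V} (hF : IsFace n F) {x : V} (hx : InCube n x)
    (hcmp : ∀ y ∈ F, slt y x ∨ slt x y) : IsFace n (insert x F) := by
  refine ⟨Finset.forall_mem_insert _ _ _ |>.mpr ⟨hx, hF.1⟩, ?_⟩
  simp only [Finset.mem_insert]
  rintro u (rfl | hu) v (rfl | hv) huv
  · exact absurd rfl huv
  · exact (hcmp v hv).symm
  · exact hcmp u hu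
  · exact hF.2 u hu v hv huv

lemma isFacet_iff {F : Finset V} (hF : IsFace n F) :
    IsFacet n F ↔ ∀ x, InCube n x → ¬∀ y ∈ F, slt y x ∨ slt x y := by
  refine ⟨fun hfacet x hx hcmp => ?_, fun h => ⟨hF, fun G hG hFG => ?_⟩⟩
  · have hxF : x ∈ F :=
      hfacet.2 _ (hF.insert hx hcmp) (Finset.subset_insert _ _) ▸ Finset.mem_insert_self x F
    exact (hcmp x hxF).elim (slt_irrefl x) (slt_irrefl x)
  · refine hFG.antisymm fun x hxG => ?_
    by_contra hxF
    exact h x (hG.1 x hxG) fun y hy => hG.2 y (hFG hy) x hxG (ne_of_mem_of_not_mem hy hxF)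

theorem facet_characterization_general (n : ℕ) (F : Finset V) (hF : IsFace n F)
    (L : List V) (hsort : L.Chain' slt) (htf : L.toFinset = F) (hne : L ≠ []) :
    IsFacet n F ↔
      (max (L.getLast hne).1 (max (L.getLast hne).2.1 (L.getLast hne).2.2) = n) ∧
      (min (L.head hne).1 (min (L.head hne).2.1 (L.head hne).2.2) = 1) ∧
      (∀ ℓ : ℕ, ∀ h : ℓ + 1 < L.length,
        min ((L.get ⟨ℓ + 1, h⟩).1 - (L.get ⟨ℓ, Nat.lt_of_succ_lt h⟩).1)
          (min ((L.get ⟨ℓ + 1, h⟩).2.1 - (L.get ⟨ℓ, Nat.lt_of_succ_lt h⟩).2.1)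
            ((L.get ⟨ℓ + 1, h⟩).2.2 - (L.get ⟨ℓ, Nat.lt_of_succ_lt h⟩).2.2)) = 1) := by
  subst htf
  have hcube : ∀ y ∈ L, InCube n y := fun y hy => hF.1 y (List.mem_toFinset.2 hy)
  simp only [List.get_eq_getElem, isFacet_iff hF, List.mem_toFinset,
    hsort.forall_mem_comparable_iff hne,
    ← not_exists_slt_above_iff (hcube _ (L.getLast_mem hne)),
    ← not_exists_slt_below_iff (hcube _ (L.head_mem hne))]
  have hgap (ℓ : ℕ) (h : ℓ + 1 < L.length) :
      (¬∃ x, InCube n x ∧ slt L[ℓ] x ∧ slt x L[ℓ + 1]) ↔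
        min (L[ℓ + 1].1 - L[ℓ].1) (min (L[ℓ + 1].2.1 - L[ℓ].2.1) (L[ℓ + 1].2.2 - L[ℓ].2.2)) = 1 :=
    not_exists_slt_between_iff (List.isChain_iff_getElem.mp hsort ℓ h) (hcube _ (L.getElem_mem _))
  simp only [← hgap, not_or, not_exists, not_and, forall_and]
  exact and_congr_right' <| and_congr_right'
    ⟨fun h ℓ hℓ x hx => h x hx ℓ hℓ, fun h x hx ℓ hℓ => h ℓ hℓ x hx⟩

/-- Characterization of the facets of `Δ(n)` (Lemma 4.1):  a nonempty face `F`, with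
elements listed in increasing order by the list `L`, is a facet iff
(P1) the largest vertex has maximal coordinate `n`,
(P2) the smallest vertex has minimal coordinate `1`, and
(P3) consecutive vertices differ by exactly `1` in some coordinate. -/
theorem facet_characterization (n : ℕ) (hn : 1 ≤ n) (F : Finset V) (hF : IsFace n F)
    (L : List V) (hsort : L.Chain' slt) (htf : L.toFinset = F) (hne : L ≠ []) :
    IsFacet n F ↔
      (max (L.getLast hne).1 (max (L.getLast hne).2.1 (L.getLast hne).2.2) = n) ∧
      (min (L.head hne).1 (min (L.head hne).2.1 (L.head hne).2.2) = 1) ∧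
      (∀ ℓ : ℕ, ∀ h : ℓ + 1 < L.length,
        min ((L.get ⟨ℓ + 1, h⟩).1 - (L.get ⟨ℓ, Nat.lt_of_succ_lt h⟩).1)
          (min ((L.get ⟨ℓ + 1, h⟩).2.1 - (L.get ⟨ℓ, Nat.lt_of_succ_lt h⟩).2.1)
            ((L.get ⟨ℓ + 1, h⟩).2.2 - (L.get ⟨ℓ, Nat.lt_of_succ_lt h⟩).2.2)) = 1) :=
  facet_characterization_general n F hF L hsort htf hne
end

section
/- Let n ≥ 2 and let F be a facet of Δ(n) all of whose vertices satisfy the B-condition in F (a homology facet). Then exactly one of the following holds: (a) the last (componentwise largest) vertex of F has some coordinate strictly less than n; or (b) (n,n,n) ∈ F, the set G = F \ {(n,n,n)} is a facet of Δ(n-1) all of whose vertices satisfy the B-condition in G, and the last vertex of G has some coordinate strictly less than n-1. Conversely, every set F of the form described in (b) is a facet of Δ(n) all of whose vertices satisfy the B-condition. -/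
/-- The `ℓ`-th vertex of the (increasingly sorted) list `L` satisfies the B-condition. -/
def BCond (L : List V) (ℓ : ℕ) (h : ℓ < L.length) : Prop :=
  (ℓ = 0 ∧ (1 < (L.get ⟨ℓ, h⟩).1 ∨ 1 < (L.get ⟨ℓ, h⟩).2.1 ∨ 1 < (L.get ⟨ℓ, h⟩).2.2)) ∨
  (0 < ℓ ∧
    (1 < (L.get ⟨ℓ, h⟩).1 - (L.get ⟨ℓ - 1, by omega⟩).1 ∨
     1 < (L.get ⟨ℓ, h⟩).2.1 - (L.get ⟨ℓ - 1, by omega⟩).2.1 ∨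
     1 < (L.get ⟨ℓ, h⟩).2.2 - (L.get ⟨ℓ - 1, by omega⟩).2.2))

/-- `F` is a homology facet of `Δ(n)`: a facet all of whose vertices satisfy the
B-condition (with respect to the unique increasing listing of `F`). -/
def HomFacet (n : ℕ) (F : Finset V) : Prop :=
  IsFacet n F ∧ ∀ L : List V, L.Chain' slt → L.toFinset = F →
    ∀ ℓ : ℕ, ∀ h : ℓ < L.length, BCond L ℓ h

/-- The last (componentwise largest) vertex of `F` has some coordinate `< n`. -/
def LastCoordLt (n : ℕ) (F : Finset V) : Prop :=
  ∃ v ∈ F, (∀ u ∈ F, u ≠ v → slt u v) ∧ (v.1 < n ∨ v.2.1 < n ∨ v.2.2 < n)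

/-- Alternative (b): `(n,n,n) ∈ F`, `F \ {(n,n,n)}` is a homology facet of `Δ(n-1)` whose
last vertex has some coordinate `< n-1`. -/
def CondB (n : ℕ) (F : Finset V) : Prop :=
  ((n, n, n) : V) ∈ F ∧ HomFacet (n - 1) (F.erase ((n, n, n) : V)) ∧
    LastCoordLt (n - 1) (F.erase ((n, n, n) : V))

open Finset

section StrictChains

variable {α : Type*} [DecidableEq α] {r : α → α → Prop}

def IsLast (r : α → α → Prop) (F : Finset α) (v : α) : Prop :=
  v ∈ F ∧ ∀ u ∈ F, u ≠ v → r u v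

theorem IsLast.unique [IsStrictOrder α r] {F : Finset α} {v w : α} (hv : IsLast r F v)
    (hw : IsLast r F w) : v = w := by
  by_contra h
  exact asymm (hw.2 v hv.1 h) (hv.2 w hw.1 (Ne.symm h))

theorem isLast_insert {G : Finset α} {v : α} (hG : ∀ u ∈ G, r u v) : IsLast r (insert v G) v :=
  ⟨mem_insert_self v G, fun u hu huv => hG u ((mem_insert.1 hu).resolve_left huv)⟩

theorem IsChain.exists_isLast [IsTrans α r] {F : Finset α} (hF : IsChain r (F : Set α))
    (hne : F.Nonempty) : ∃ v, IsLast r F v := by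
  induction F using Finset.induction_on with
  | empty => exact absurd hne (by simp)
  | insert a s has ih =>
    rcases s.eq_empty_or_nonempty with rfl | hs
    · exact ⟨a, isLast_insert (by simp)⟩
    obtain ⟨w, hws, hw⟩ := ih (hF.mono (by simp)) hs
    have hne_aw : a ≠ w := fun h => has (h ▸ hws)
    rcases hF (by simp) (by simp [hws]) hne_aw with haw | hwa
    · refine ⟨w, mem_insert_of_mem hws, fun u hu huw => ?_⟩
      rcases mem_insert.1 hu with rfl | hu
      exacts [haw, hw u hu huw]
    · refine ⟨a, isLast_insert fun u (hu : u ∈ s) => ?_⟩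
      rcases eq_or_ne u w with rfl | huw
      exacts [hwa, _root_.trans (hw u hu huw) hwa]

theorem isLast_getLast [IsTrans α r] {L : List α} {F : Finset α} (hL : L.IsChain r)
    (hLF : L.toFinset = F) (hne : L ≠ []) : IsLast r F (L.getLast hne) := by
  have hpair := (List.dropLast_append_getLast hne ▸ hL).pairwise
  refine ⟨hLF ▸ List.mem_toFinset.2 (L.getLast_mem hne), fun u hu hne' => ?_⟩
  rw [← hLF, List.mem_toFinset, ← List.dropLast_append_getLast hne, List.mem_append] at hu
  rcases hu with hu | hu
  · exact List.pairwise_append.1 hpair |>.2.2 u hu _ (List.mem_singleton_self _)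
  · exact absurd (List.mem_singleton.1 hu) hne'

theorem isChain_and_toFinset_eq_insert_iff [IsStrictOrder α r] {G : Finset α} {v : α}
    (hG : ∀ u ∈ G, r u v) {L : List α} :
    L.IsChain r ∧ L.toFinset = insert v G ↔
      ∃ D : List α, D.IsChain r ∧ D.toFinset = G ∧ L = D ++ [v] := by
  have hvG : v ∉ G := fun h => irrefl v (hG v h)
  constructor
  · rintro ⟨hL, hLF⟩
    have hne : L ≠ [] := (List.toFinset_nonempty_iff L).1 (hLF ▸ insert_nonempty v G)
    have hlast := (isLast_getLast hL hLF hne).unique (isLast_insert hG)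
    obtain ⟨D, rfl⟩ : ∃ D, L = D ++ [v] :=
      ⟨L.dropLast, hlast ▸ (L.dropLast_append_getLast hne).symm⟩
    have hvD : v ∉ D.toFinset := fun h =>
      irrefl v (List.pairwise_append.1 hL.pairwise |>.2.2 v (List.mem_toFinset.1 h) v (by simp))
    refine ⟨D, hL.left_of_append, ?_, rfl⟩
    have := congrArg (·.erase v) hLF
    simpa [List.toFinset_append, ← insert_eq, erase_insert hvD, erase_insert hvG] using this
  · rintro ⟨D, hD, rfl, rfl⟩
    refine ⟨hD.append (List.isChain_singleton v) fun x hx y hy => ?_, ?_⟩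
    · rw [List.head?_cons, Option.mem_some_iff] at hy
      exact hy ▸ hG x (List.mem_toFinset.2 (List.mem_of_mem_getLast? hx))
    · simp [List.toFinset_append]

theorem exists_isChain_toFinset_eq [IsStrictOrder α r] {F : Finset α}
    (hF : IsChain r (F : Set α)) :
    ∃ L : List α, L.IsChain r ∧ L.toFinset = F := by
  induction F using Finset.strongInduction with
  | H F ih =>
    rcases F.eq_empty_or_nonempty with rfl | hne
    · exact ⟨[], List.IsChain.nil, rfl⟩
    obtain ⟨v, hv, hlast⟩ := hF.exists_isLast hne
    have hG : ∀ u ∈ F.erase v, r u v := fun u hu =>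
      hlast u (mem_of_mem_erase hu) (ne_of_mem_erase hu)
    obtain ⟨D, hD, hDF⟩ := ih (F.erase v) (erase_ssubset hv) (hF.mono (by simp))
    have := (isChain_and_toFinset_eq_insert_iff hG).2 ⟨D, hD, hDF, rfl⟩
    exact ⟨_, insert_erase hv ▸ this⟩

end StrictChains

instance : IsStrictOrder V slt where
  irrefl _ h := lt_irrefl _ h.1
  trans _ _ _ h₁ h₂ := ⟨h₁.1.trans h₂.1, h₁.2.1.trans h₂.2.1, h₁.2.2.trans h₂.2.2⟩

section Faces

variable {n : ℕ} {F G : Finset V}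

theorem IsFace.isChain (hF : IsFace n F) : IsChain slt (F : Set V) :=
  fun _ hu _ hv huv => hF.2 _ hu _ hv huv

theorem IsFace.slt_top (hG : IsFace (n - 1) G) {u : V} (hu : u ∈ G) : slt u (n, n, n) := by
  have := hG.1 u hu
  simp only [mem_Icc] at this
  show u.1 < n ∧ u.2.1 < n ∧ u.2.2 < n
  omega

theorem IsFace.top_notMem (hG : IsFace (n - 1) G) : ((n, n, n) : V) ∉ G :=
  fun h => irrefl _ (hG.slt_top h)

theorem IsFace.isLast_top (hF : IsFace n F) (ht : ((n, n, n) : V) ∈ F) :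
    IsLast slt F (n, n, n) := by
  refine ⟨ht, fun u hu hne => (hF.2 u hu _ ht hne).resolve_right fun h => ?_⟩
  have := (hF.1 u hu).1
  simp only [mem_Icc] at this
  exact absurd h.1 (by simpa using this.2)

theorem IsFace.eq_top_of_not_lt (hF : IsFace n F) {v : V} (hv : v ∈ F)
    (h : ¬(v.1 < n ∨ v.2.1 < n ∨ v.2.2 < n)) : v = (n, n, n) := by
  have := hF.1 v hv
  simp only [mem_Icc] at this
  ext <;> simp <;> omega

theorem IsFace.not_lastCoordLt (hF : IsFace n F) (ht : ((n, n, n) : V) ∈ F) :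
    ¬LastCoordLt n F := by
  rintro ⟨v, hv, hlast, hlt⟩
  obtain rfl := (hF.isLast_top ht).unique ⟨hv, hlast⟩
  simp at hlt

theorem isFace_insert_top_iff (hn : 1 ≤ n) (ht : ((n, n, n) : V) ∉ G) :
    IsFace n (insert (n, n, n) G) ↔ IsFace (n - 1) G := by
  constructor
  · intro hF
    refine ⟨fun u hu => ?_, fun u hu v hv => hF.2 u (mem_insert_of_mem hu) v (mem_insert_of_mem hv)⟩
    have hlt := (hF.isLast_top (mem_insert_self _ G)).2 u (mem_insert_of_mem hu)
      (ne_of_mem_of_not_mem hu ht)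
    have := hF.1 u (mem_insert_of_mem hu)
    simp only [slt, mem_Icc] at hlt this ⊢
    omega
  · intro hG
    refine ⟨fun u hu => ?_, fun u hu v hv huv => ?_⟩
    · rcases mem_insert.1 hu with rfl | hu
      · simp only [mem_Icc]; omega
      · have := hG.1 u hu
        simp only [mem_Icc] at this ⊢
        omega
    · rcases mem_insert.1 hu with rfl | hu <;> rcases mem_insert.1 hv with rfl | hv
      exacts [absurd rfl huv, Or.inr (hG.slt_top hv), Or.inl (hG.slt_top hu), hG.2 u hu v hv huv]

theorem isFacet_insert_top_iff (hn : 1 ≤ n) (ht : ((n, n, n) : V) ∉ G) :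
    IsFacet n (insert (n, n, n) G) ↔ IsFacet (n - 1) G := by
  rw [IsFacet, IsFacet, isFace_insert_top_iff hn ht]
  refine and_congr_right fun hG => ⟨fun hmax H hH hGH => ?_, fun hmax H hH hGH => ?_⟩
  · have htH := hH.top_notMem
    have := hmax _ ((isFace_insert_top_iff hn htH).2 hH) (insert_subset_insert _ hGH)
    simpa [erase_insert ht, erase_insert htH] using congrArg (·.erase ((n, n, n) : V)) this
  · have htH : ((n, n, n) : V) ∈ H := hGH (mem_insert_self _ G)
    have hH' : IsFace (n - 1) (H.erase (n, n, n)) :=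
      (isFace_insert_top_iff hn (notMem_erase _ H)).1 (by rwa [insert_erase htH])
    have hsub : G ⊆ H.erase (n, n, n) := fun u hu =>
      mem_erase.2 ⟨ne_of_mem_of_not_mem hu ht, hGH (mem_insert_of_mem hu)⟩
    rw [hmax _ hH' hsub, insert_erase htH]

theorem IsFacet.nonempty (hn : 1 ≤ n) (hF : IsFacet n F) : F.Nonempty := by
  rw [nonempty_iff_ne_empty]
  rintro rfl
  have h111 : IsFace n {((1, 1, 1) : V)} := ⟨by simp; omega, by simp⟩
  exact singleton_ne_empty _ (hF.2 _ h111 (empty_subset _)).symm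

end Faces

section BCondition

def BJump (u v : V) : Prop :=
  1 < v.1 - u.1 ∨ 1 < v.2.1 - u.2.1 ∨ 1 < v.2.2 - u.2.2

def AllBCond (L : List V) : Prop :=
  ∀ ℓ (h : ℓ < L.length), BCond L ℓ h

def SatisfiesBCond (F : Finset V) : Prop :=
  ∀ L : List V, L.IsChain slt → L.toFinset = F → AllBCond L

theorem homFacet_iff {n : ℕ} {F : Finset V} : HomFacet n F ↔ IsFacet n F ∧ SatisfiesBCond F :=
  Iff.rfl

variable {L : List V} (x : V)

theorem bCond_append_singleton_of_lt {ℓ : ℕ} (h : ℓ < L.length) :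
    BCond (L ++ [x]) ℓ (by simp; omega) ↔ BCond L ℓ h := by
  simp only [BCond, List.get_eq_getElem, List.getElem_append_left h,
    List.getElem_append_left (show ℓ - 1 < L.length by omega)]

theorem bCond_append_singleton_length (hne : L ≠ []) :
    BCond (L ++ [x]) L.length (by simp) ↔ BJump (L.getLast hne) x := by
  have hpos : 0 < L.length := List.length_pos_iff.2 hne
  simp only [BCond, BJump, List.get_eq_getElem, List.getElem_concat_length,
    List.getElem_append_left (show L.length - 1 < L.length by omega), List.getLast_eq_getElem]
  omega

theorem allBCond_append_singleton_iff (hne : L ≠ []) :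
    AllBCond (L ++ [x]) ↔ AllBCond L ∧ BJump (L.getLast hne) x := by
  refine ⟨fun h => ⟨fun ℓ hℓ => ?_, ?_⟩, fun ⟨hL, hx⟩ ℓ hℓ => ?_⟩
  · exact (bCond_append_singleton_of_lt x hℓ).1 (h ℓ _)
  · exact (bCond_append_singleton_length x hne).1 (h _ _)
  · rcases (show ℓ < L.length ∨ ℓ = L.length by simp at hℓ; omega) with hlt | rfl
    · exact (bCond_append_singleton_of_lt x hlt).2 (hL ℓ hlt)
    · exact (bCond_append_singleton_length x hne).2 hx

theorem satisfiesBCond_insert_iff {G : Finset V} {v : V} (hG : ∀ u ∈ G, slt u v)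
    (hGc : IsChain slt (G : Set V)) (hne : G.Nonempty) :
    SatisfiesBCond (insert v G) ↔ SatisfiesBCond G ∧ ∃ w, IsLast slt G w ∧ BJump w v := by
  have hD_ne {D : List V} (hDG : D.toFinset = G) : D ≠ [] :=
    (List.toFinset_nonempty_iff D).1 (hDG ▸ hne)
  constructor
  · intro h
    have hext {D : List V} (hD : D.IsChain slt) (hDG : D.toFinset = G) :
        AllBCond D ∧ BJump (D.getLast (hD_ne hDG)) v := by
      obtain ⟨hL, hLF⟩ := (isChain_and_toFinset_eq_insert_iff hG).2 ⟨D, hD, hDG, rfl⟩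
      exact (allBCond_append_singleton_iff v _).1 (h _ hL hLF)
    obtain ⟨D, hD, hDG⟩ := exists_isChain_toFinset_eq hGc
    exact ⟨fun D hD hDG => (hext hD hDG).1, _, isLast_getLast hD hDG _, (hext hD hDG).2⟩
  · rintro ⟨hB, w, hw, hjump⟩ L hL hLG
    obtain ⟨D, hD, hDG, rfl⟩ := (isChain_and_toFinset_eq_insert_iff hG).1 ⟨hL, hLG⟩
    rw [allBCond_append_singleton_iff v (hD_ne hDG), (isLast_getLast hD hDG _).unique hw]
    exact ⟨hB D hD hDG, hjump⟩

theorem satisfiesBCond_insert_top_iff {n : ℕ} {G : Finset V} (hG : IsFace (n - 1) G)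
    (hne : G.Nonempty) :
    SatisfiesBCond (insert (n, n, n) G) ↔ SatisfiesBCond G ∧ LastCoordLt (n - 1) G := by
  rw [satisfiesBCond_insert_iff (fun _ => hG.slt_top) hG.isChain hne]
  refine and_congr_right fun _ => exists_congr fun w => ?_
  simp only [IsLast, BJump, and_assoc]
  refine and_congr_right fun _ => and_congr_right fun _ => ?_
  omega

end BCondition

theorem homFacet_iff_condB {n : ℕ} {F : Finset V} (hn : 2 ≤ n) (ht : ((n, n, n) : V) ∈ F) :
    HomFacet n F ↔ CondB n F := by
  obtain ⟨G, htG, rfl⟩ : ∃ G, ((n, n, n) : V) ∉ G ∧ F = insert (n, n, n) G :=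
    ⟨F.erase _, notMem_erase _ F, (insert_erase ht).symm⟩
  simp only [homFacet_iff, CondB, erase_insert htG, mem_insert_self, true_and,
    isFacet_insert_top_iff (by omega : 1 ≤ n) htG, and_assoc]
  exact and_congr_right fun hG => satisfiesBCond_insert_top_iff hG.1 (hG.nonempty (by omega))

/-- Lemma 7.2: the homology facets of `Δ(n)` split into two disjoint families,
`X` (last vertex has a coordinate `< n`) and `Y` (obtained from a member of the family
`X` for `Δ(n-1)` by adjoining `(n,n,n)`); conversely every set of the second form is
a homology facet of `Δ(n)`. -/
theorem homology_facets_decomposition (n : ℕ) (hn : 2 ≤ n) :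
    ∀ F : Finset V,
      (HomFacet n F → (LastCoordLt n F ∨ CondB n F) ∧ ¬(LastCoordLt n F ∧ CondB n F)) ∧
      (CondB n F → HomFacet n F) := by
  intro F
  refine ⟨fun hF => ⟨?_, fun ⟨hX, hY⟩ => hF.1.1.not_lastCoordLt hY.1 hX⟩,
    fun hY => (homFacet_iff_condB hn hY.1).2 hY⟩
  obtain ⟨v, hv, hlast⟩ := hF.1.1.isChain.exists_isLast (hF.1.nonempty (by omega))
  by_cases hcoord : v.1 < n ∨ v.2.1 < n ∨ v.2.2 < n
  · exact Or.inl ⟨v, hv, hlast, hcoord⟩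
  · obtain rfl := hF.1.1.eq_top_of_not_lt hv hcoord
    exact Or.inr ((homFacet_iff_condB hn hv).1 hF)
end

section
/- For every natural number n, ∑_{s=0}^{n} (-1)^s (binom(n,s))^3 = ∑_{F} (-1)^{|F|}, where the right-hand sum ranges over all facets F of Δ(n) every vertex of which satisfies the B-condition in F. -/
/-!
Sorting identifies the faces of `Δ(n)` with strictly increasing lists of triples, and such a
list of length `s` is the same as three `s`-subsets of `{1,…,n}`; so the left side is the
signed count of all faces. Scan a chain `v₁ < ⋯ < vᵣ` upwards from `v₀ = 0` and toggle the
first vertex of the form `v_{ℓ-1} + (1,1,1)`: delete it if it is `v_ℓ`, insert it if it lies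
strictly below `v_ℓ` (or above `vᵣ` inside the cube). This is a sign-reversing involution; it
is undefined exactly on the facets all of whose vertices satisfy the B-condition, since a
vertex fits strictly between `u` and `v` iff `u + (1,1,1) < v`.
-/

open Finset

namespace Delta

instance : DecidableRel slt := fun _ _ => inferInstanceAs (Decidable (_ ∧ _ ∧ _))

instance : IsTrans V slt :=
  ⟨fun _ _ _ h h' => ⟨h.1.trans h'.1, h.2.1.trans h'.2.1, h.2.2.trans h'.2.2⟩⟩

lemma slt_irrefl (v : V) : ¬ slt v v := fun h => lt_irrefl _ h.1

lemma ne_of_slt {u v : V} (h : slt u v) : u ≠ v := by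
  rintro rfl; exact slt_irrefl u h

lemma slt_add_one (v : V) : slt v (v + 1) := by
  simp only [slt, Prod.fst_add, Prod.snd_add, Prod.fst_one, Prod.snd_one]; omega

lemma add_one_slt_of_slt_of_slt {u v w : V} (huv : slt u v) (hvw : slt v w) : slt (u + 1) w := by
  obtain ⟨_, _, _⟩ := huv; obtain ⟨_, _, _⟩ := hvw
  simp only [slt, Prod.fst_add, Prod.snd_add, Prod.fst_one, Prod.snd_one]; omega

lemma ne_add_one_iff {u v : V} (h : slt u v) :
    v ≠ u + 1 ↔ 1 < v.1 - u.1 ∨ 1 < v.2.1 - u.2.1 ∨ 1 < v.2.2 - u.2.2 := by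
  obtain ⟨_, _, _⟩ := h
  rw [Ne, Prod.ext_iff, Prod.ext_iff]
  simp only [Prod.fst_add, Prod.snd_add, Prod.fst_one, Prod.snd_one]; omega

def cube (n : ℕ) : Finset V := Icc 1 n ×ˢ Icc 1 n ×ˢ Icc 1 n

lemma mem_cube {n : ℕ} {v : V} :
    v ∈ cube n ↔ v.1 ∈ Icc 1 n ∧ v.2.1 ∈ Icc 1 n ∧ v.2.2 ∈ Icc 1 n := by
  simp only [cube, mem_product]

lemma zero_slt_of_mem_cube {n : ℕ} {v : V} (hv : v ∈ cube n) : slt 0 v := by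
  simp only [mem_cube, mem_Icc] at hv
  simp only [slt, Prod.fst_zero, Prod.snd_zero]; omega

lemma add_one_mem_cube_iff {n : ℕ} {u : V} : u + 1 ∈ cube n ↔ ∃ w ∈ cube n, slt u w := by
  refine ⟨fun h => ⟨u + 1, h, slt_add_one u⟩, ?_⟩
  rintro ⟨w, hw, _, _, _⟩
  simp only [mem_cube, mem_Icc] at hw ⊢
  simp only [Prod.fst_add, Prod.snd_add, Prod.fst_one, Prod.snd_one]; omega

-- Any `slt`-monotone injection of `V` into `ℕ` would do here: it only serves to sort faces.
def key (v : V) : ℕ := Nat.pair v.1 (Nat.pair v.2.1 v.2.2)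

lemma key_injective : Function.Injective key := by
  rintro ⟨a, b, c⟩ ⟨d, e, f⟩ h
  simp_all [key]

lemma key_lt_key {u v : V} (h : slt u v) : key u < key v :=
  calc key u < Nat.pair v.1 (Nat.pair u.2.1 u.2.2) := Nat.pair_lt_pair_left _ h.1
    _ < Nat.pair v.1 (Nat.pair v.2.1 u.2.2) :=
      Nat.pair_lt_pair_right _ (Nat.pair_lt_pair_left _ h.2.1)
    _ < key v := Nat.pair_lt_pair_right _ (Nat.pair_lt_pair_right _ h.2.2)

def KeyLE (u v : V) : Prop := key u ≤ key v

instance : DecidableRel KeyLE := fun _ _ => inferInstanceAs (Decidable (_ ≤ _))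
instance : IsTrans V KeyLE := ⟨fun _ _ _ => le_trans⟩
instance : Std.Total KeyLE := ⟨fun _ _ => le_total _ _⟩
instance : Std.Antisymm KeyLE := ⟨fun _ _ h h' => key_injective (le_antisymm h h')⟩

def chainList (F : Finset V) : List V := F.sort KeyLE

lemma chainList_toFinset (F : Finset V) : (chainList F).toFinset = F := sort_toFinset _ _

lemma mem_chainList {F : Finset V} {v : V} : v ∈ chainList F ↔ v ∈ F := mem_sort _

lemma pairwise_chainList {F : Finset V}
    (hF : ∀ u ∈ F, ∀ v ∈ F, u ≠ v → slt u v ∨ slt v u) : (chainList F).Pairwise slt := by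
  refine ((pairwise_sort F KeyLE).and (sort_nodup F KeyLE)).imp_of_mem ?_
  intro u v hu hv ⟨hle, hne⟩
  refine (hF u (mem_chainList.mp hu) v (mem_chainList.mp hv) hne).resolve_right fun hvu => ?_
  exact (key_lt_key hvu).not_ge hle

lemma chainList_toFinset_of_pairwise {L : List V} (hL : L.Pairwise slt) :
    chainList L.toFinset = L :=
  (List.toFinset_sort _ (hL.imp ne_of_slt)).mpr (hL.imp fun h => (key_lt_key h).le)

lemma isFace_iff {n : ℕ} {F : Finset V} :
    IsFace n F ↔ F ⊆ cube n ∧ ∀ u ∈ F, ∀ v ∈ F, u ≠ v → slt u v ∨ slt v u := by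
  simp only [IsFace, subset_iff, mem_cube]

lemma isFace_toFinset {n : ℕ} {L : List V} (hL : L.Pairwise slt)
    (hcube : ∀ v ∈ L, v ∈ cube n) : IsFace n L.toFinset := by
  refine isFace_iff.mpr ⟨fun v hv => hcube v (List.mem_toFinset.mp hv), ?_⟩
  have : Std.Symm fun u v : V => slt u v ∨ slt v u := ⟨fun _ _ => Or.symm⟩
  simpa only [List.mem_toFinset] using (hL.imp Or.inl).forall

open Classical in
noncomputable def chains (n : ℕ) : Finset (List V) :=
  ((cube n).powerset.filter (IsFace n)).image chainList

lemma mem_chains {n : ℕ} {L : List V} :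
    L ∈ chains n ↔ L.Pairwise slt ∧ ∀ v ∈ L, v ∈ cube n := by
  simp only [chains, mem_image, mem_filter, mem_powerset]
  constructor
  · rintro ⟨F, ⟨-, hF⟩, rfl⟩
    exact ⟨pairwise_chainList (isFace_iff.mp hF).2,
      fun v hv => (isFace_iff.mp hF).1 (mem_chainList.mp hv)⟩
  · rintro ⟨hL, hcube⟩
    have hF := isFace_toFinset hL hcube
    exact ⟨L.toFinset, ⟨(isFace_iff.mp hF).1, hF⟩, chainList_toFinset_of_pairwise hL⟩

lemma sum_filter_powerset_cube_eq {M : Type*} [AddCommMonoid M] {n : ℕ} (q : Finset V → Prop)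
    [DecidablePred q] (hq : ∀ F, q F → IsFace n F) (f : ℕ → M) :
    ∑ F ∈ (cube n).powerset.filter q, f F.card =
      ∑ L ∈ (chains n).filter (fun L => q L.toFinset), f L.length := by
  refine sum_nbij' chainList List.toFinset ?_ ?_ ?_ ?_ ?_
  · intro F hF
    obtain ⟨-, hqF⟩ := mem_filter.mp hF
    obtain ⟨hsub, hcomp⟩ := isFace_iff.mp (hq F hqF)
    refine mem_filter.mpr ⟨mem_chains.mpr ⟨pairwise_chainList hcomp, ?_⟩, ?_⟩
    · exact fun v hv => hsub (mem_chainList.mp hv)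
    · rwa [chainList_toFinset]
  · intro L hL
    obtain ⟨-, hqL⟩ := mem_filter.mp hL
    exact mem_filter.mpr ⟨mem_powerset.mpr (isFace_iff.mp (hq _ hqL)).1, hqL⟩
  · intro F _
    exact chainList_toFinset F
  · intro L hL
    exact chainList_toFinset_of_pairwise (mem_chains.mp (mem_filter.mp hL).1).1
  · intro F _
    rw [chainList, length_sort]

noncomputable def incLists (n s : ℕ) : Finset (List ℕ) :=
  (powersetCard s (Icc 1 n)).image (·.sort)

lemma mem_incLists {n s : ℕ} {a : List ℕ} :
    a ∈ incLists n s ↔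
      a.Pairwise (· < ·) ∧ a.length = s ∧ ∀ x ∈ a, x ∈ Icc 1 n := by
  simp only [incLists, mem_image, mem_powersetCard]
  constructor
  · rintro ⟨A, ⟨hA, rfl⟩, rfl⟩
    exact ⟨List.sortedLT_iff_pairwise.mp (sortedLT_sort A), length_sort _,
      fun x hx => hA ((mem_sort _).mp hx)⟩
  · rintro ⟨ha, rfl, hmem⟩
    have hnd : a.Nodup := ha.imp ne_of_lt
    exact ⟨a.toFinset, ⟨fun x hx => hmem x (List.mem_toFinset.mp hx),
      List.toFinset_card_of_nodup hnd⟩, (List.toFinset_sort _ hnd).mpr (ha.imp le_of_lt)⟩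

lemma card_incLists (n s : ℕ) : #(incLists n s) = n.choose s := by
  rw [incLists, card_image_of_injOn, card_powersetCard, Nat.card_Icc, Nat.add_sub_cancel]
  intro A _ B _ h
  simpa only [sort_toFinset] using congrArg List.toFinset h

def unzip3 (L : List V) : List ℕ × List ℕ × List ℕ :=
  (L.map Prod.fst, (L.map Prod.snd).map Prod.fst, (L.map Prod.snd).map Prod.snd)

def zip3 (t : List ℕ × List ℕ × List ℕ) : List V := t.1.zip (t.2.1.zip t.2.2)

lemma zip3_unzip3 (L : List V) : zip3 (unzip3 L) = L := by
  induction L <;> simp_all [zip3, unzip3]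

lemma unzip3_zip3 {a b c : List ℕ} (hb : b.length = a.length) (hc : c.length = a.length) :
    unzip3 (zip3 (a, b, c)) = (a, b, c) := by
  simp [unzip3, zip3, List.map_fst_zip, List.map_snd_zip, hb, hc]

lemma pairwise_zip3 {a b c : List ℕ} (ha : a.Pairwise (· < ·)) (hb : b.Pairwise (· < ·))
    (hc : c.Pairwise (· < ·)) : (zip3 (a, b, c)).Pairwise slt := by
  rw [List.pairwise_iff_getElem] at *
  intro i j hi hj hij
  simp only [zip3, List.length_zip] at hi hj
  simp only [zip3, List.getElem_zip]
  exact ⟨ha i j (by omega) (by omega) hij, hb i j (by omega) (by omega) hij,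
    hc i j (by omega) (by omega) hij⟩

lemma unzip3_mem_incLists {n : ℕ} {L : List V} (hL : L ∈ chains n) :
    unzip3 L ∈ incLists n L.length ×ˢ incLists n L.length ×ˢ incLists n L.length := by
  obtain ⟨hL, hcube⟩ := mem_chains.mp hL
  simp only [unzip3, mem_product, mem_incLists, List.pairwise_map, List.length_map,
    List.forall_mem_map, true_and]
  exact ⟨⟨hL.imp (·.1), fun v hv => (mem_cube.mp (hcube v hv)).1⟩,
    ⟨hL.imp (·.2.1), fun v hv => (mem_cube.mp (hcube v hv)).2.1⟩,
    hL.imp (·.2.2), fun v hv => (mem_cube.mp (hcube v hv)).2.2⟩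

lemma length_le_of_mem_chains {n : ℕ} {L : List V} (hL : L ∈ chains n) : L.length ≤ n := by
  have hpos : 0 < n.choose L.length :=
    card_incLists n L.length ▸ card_pos.mpr ⟨_, (mem_product.mp (unzip3_mem_incLists hL)).1⟩
  by_contra h
  exact hpos.ne' (Nat.choose_eq_zero_iff.mpr (by omega))

lemma card_chains_length (n s : ℕ) : #{L ∈ chains n | L.length = s} = n.choose s ^ 3 := by
  suffices #{L ∈ chains n | L.length = s} = #(incLists n s ×ˢ incLists n s ×ˢ incLists n s) by
    rw [this, card_product, card_product, card_incLists]; ring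
  refine card_nbij' unzip3 zip3 ?_ ?_ (fun L _ => zip3_unzip3 L) ?_
  · intro L hL
    obtain ⟨hmem, rfl⟩ := mem_filter.mp hL
    exact unzip3_mem_incLists hmem
  · rintro ⟨a, b, c⟩ ht
    simp only [coe_product, Set.mem_prod, mem_coe, mem_incLists] at ht
    obtain ⟨⟨ha, rfl, hma⟩, ⟨hb, hlb, hmb⟩, ⟨hc, hlc, hmc⟩⟩ := ht
    refine mem_filter.mpr ⟨mem_chains.mpr ⟨pairwise_zip3 ha hb hc, fun v hv => ?_⟩, by
      simp [zip3, hlb, hlc]⟩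
    obtain ⟨hv1, hv23⟩ := List.of_mem_zip hv
    obtain ⟨hv2, hv3⟩ := List.of_mem_zip hv23
    exact mem_cube.mpr ⟨hma _ hv1, hmb _ hv2, hmc _ hv3⟩
  · rintro ⟨a, b, c⟩ ht
    simp only [coe_product, Set.mem_prod, mem_coe, mem_incLists] at ht
    exact unzip3_zip3 (ht.2.1.2.1.trans ht.1.2.1.symm) (ht.2.2.2.1.trans ht.1.2.1.symm)

lemma sum_chains_neg_one_pow (n : ℕ) :
    ∑ L ∈ chains n, (-1 : ℤ) ^ L.length =
      ∑ s ∈ range (n + 1), (-1 : ℤ) ^ s * (n.choose s : ℤ) ^ 3 := by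
  rw [← sum_fiberwise_of_maps_to (g := List.length)
    fun L hL => mem_range.mpr (Nat.lt_succ_of_le (length_le_of_mem_chains hL))]
  refine sum_congr rfl fun s _ => ?_
  rw [sum_congr rfl fun L hL => by rw [(mem_filter.mp hL).2], sum_const, card_chains_length,
    nsmul_eq_mul]
  push_cast
  ring

lemma isFacet_iff {n : ℕ} {F : Finset V} :
    IsFacet n F ↔ IsFace n F ∧ ∀ w ∈ cube n, ¬ ∀ u ∈ F, slt u w ∨ slt w u := by
  refine ⟨fun ⟨hF, hmax⟩ => ⟨hF, fun w hw hcomp => ?_⟩,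
    fun ⟨hF, hsat⟩ => ⟨hF, fun G hG hFG => ?_⟩⟩
  · have hG : IsFace n (insert w F) := by
      refine isFace_iff.mpr ⟨insert_subset hw (isFace_iff.mp hF).1, ?_⟩
      simp only [mem_insert]
      rintro u (rfl | hu) v (rfl | hv) huv
      · exact absurd rfl huv
      · exact (hcomp v hv).symm
      · exact hcomp u hu
      · exact (isFace_iff.mp hF).2 u hu v hv huv
    have hwF : w ∈ F := hmax _ hG (subset_insert w F) ▸ mem_insert_self w F
    rcases hcomp w hwF with h | h <;> exact slt_irrefl w h
  · by_contra hne
    obtain ⟨w, hwG, hwF⟩ := exists_of_ssubset (hFG.ssubset_of_ne hne)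
    exact hsat w ((isFace_iff.mp hG).1 hwG) fun u hu =>
      (isFace_iff.mp hG).2 u (hFG hu) w hwG (by rintro rfl; exact hwF hu)

def IsCubeChain (n : ℕ) (p : V) (L : List V) : Prop :=
  (p :: L).IsChain slt ∧ ∀ v ∈ L, v ∈ cube n

lemma isCubeChain_zero_iff {n : ℕ} {L : List V} : IsCubeChain n 0 L ↔ L ∈ chains n := by
  rw [IsCubeChain, mem_chains, List.isChain_iff_pairwise, List.pairwise_cons]
  exact ⟨fun ⟨⟨_, hL⟩, hcube⟩ => ⟨hL, hcube⟩,
    fun ⟨hL, hcube⟩ => ⟨⟨fun v hv => zero_slt_of_mem_cube (hcube v hv), hL⟩, hcube⟩⟩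

lemma IsCubeChain.tail {n : ℕ} {p v : V} {L : List V} (h : IsCubeChain n p (v :: L)) :
    IsCubeChain n v L :=
  ⟨(List.isChain_cons_cons.mp h.1).2, fun u hu => h.2 u (List.mem_cons_of_mem v hu)⟩

def Saturated (n : ℕ) : V → List V → Prop
  | p, [] => p + 1 ∉ cube n
  | p, v :: L => ¬ slt (p + 1) v ∧ Saturated n v L

lemma not_saturated_iff {n : ℕ} {p : V} {L : List V} (hL : IsCubeChain n p L) :
    ¬ Saturated n p L ↔ ∃ w ∈ cube n, slt p w ∧ ∀ u ∈ L, slt u w ∨ slt w u := by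
  induction L generalizing p with
  | nil => simp [Saturated, add_one_mem_cube_iff]
  | cons v L ih =>
    have hpv : slt p v := (List.isChain_cons_cons.mp hL.1).1
    have hvL : ∀ u ∈ L, slt v u :=
      (List.pairwise_cons.mp (List.isChain_iff_pairwise.mp (List.isChain_cons_cons.mp hL.1).2)).1
    rw [Saturated, not_and_or, not_not, ih hL.tail]
    simp only [List.mem_cons, forall_eq_or_imp]
    constructor
    · rintro (hsuc | ⟨w, hw, hvw, hcomp⟩)
      · exact ⟨p + 1, add_one_mem_cube_iff.mpr ⟨v, hL.2 v List.mem_cons_self, hpv⟩,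
          slt_add_one p, Or.inr hsuc, fun u hu => Or.inr (_root_.trans hsuc (hvL u hu))⟩
      · exact ⟨w, hw, _root_.trans hpv hvw, Or.inl hvw, hcomp⟩
    · rintro ⟨w, hw, hpw, hvw | hwv, hcomp⟩
      · exact Or.inr ⟨w, hw, hvw, hcomp⟩
      · exact Or.inl (add_one_slt_of_slt_of_slt hpw hwv)

lemma isFacet_toFinset_iff {n : ℕ} {L : List V} (hL : L ∈ chains n) :
    IsFacet n L.toFinset ↔ Saturated n 0 L := by
  rw [isFacet_iff, ← not_not (a := Saturated n 0 L),
    not_saturated_iff (isCubeChain_zero_iff.mpr hL)]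
  simp only [List.mem_toFinset, not_exists, not_and]
  obtain ⟨hpw, hcube⟩ := mem_chains.mp hL
  exact ⟨fun h w hw _ => h.2 w hw,
    fun h => ⟨isFace_toFinset hpw hcube, fun w hw => h w hw (zero_slt_of_mem_cube hw)⟩⟩

def Gapped (p : V) (L : List V) : Prop := (p :: L).IsChain fun u v => v ≠ u + 1

lemma bCond_iff {L : List V} (hL : (0 :: L).IsChain slt) (ℓ : ℕ) (h : ℓ < L.length) :
    BCond L ℓ h ↔
      (0 :: L)[ℓ + 1]'(Nat.succ_lt_succ h) ≠ (0 :: L)[ℓ]'(Nat.lt_succ_of_lt h) + 1 := by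
  rw [ne_add_one_iff (List.isChain_iff_getElem.mp hL ℓ (by simpa using h))]
  cases ℓ with
  | zero => simp [BCond]
  | succ ℓ => simp [BCond]

lemma forall_bCond_iff {L : List V} (hL : (0 :: L).IsChain slt) :
    (∀ ℓ (h : ℓ < L.length), BCond L ℓ h) ↔ Gapped 0 L := by
  rw [Gapped, List.isChain_iff_getElem]
  simp only [List.length_cons, Nat.add_lt_add_iff_right]
  exact forall₂_congr (bCond_iff hL)

lemma homFacet_toFinset_iff {n : ℕ} {L : List V} (hL : L ∈ chains n) :
    HomFacet n L.toFinset ↔ Gapped 0 L ∧ Saturated n 0 L := by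
  have hpw := (mem_chains.mp hL).1
  rw [HomFacet, isFacet_toFinset_iff hL, ← forall_bCond_iff (isCubeChain_zero_iff.mpr hL).1,
    and_comm]
  refine and_congr_left' ⟨fun h => h L (List.isChain_iff_pairwise.mpr hpw) rfl, ?_⟩
  intro h L' hL' heq
  obtain rfl : L' = L := by
    rw [← chainList_toFinset_of_pairwise (List.isChain_iff_pairwise.mp hL'), heq,
      chainList_toFinset_of_pairwise hpw]
  exact h

def scan (n : ℕ) : V → List V → Option (List V)
  | p, [] => if p + 1 ∈ cube n then some [p + 1] else none
  | p, v :: L =>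
    if v = p + 1 then some L
    else if slt (p + 1) v then some ((p + 1) :: v :: L)
    else (scan n v L).map (v :: ·)

lemma scan_eq_none_iff {n : ℕ} {p : V} {L : List V} :
    scan n p L = none ↔ Gapped p L ∧ Saturated n p L := by
  induction L generalizing p with
  | nil => simp [scan, Gapped, Saturated]
  | cons v L ih =>
    by_cases h1 : v = p + 1 <;> by_cases h2 : slt (p + 1) v <;>
      simp_all [scan, Gapped, Saturated, List.isChain_cons_cons]

lemma length_scan {n : ℕ} {p : V} {L L' : List V} (h : scan n p L = some L') :
    L'.length = L.length + 1 ∨ L.length = L'.length + 1 := by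
  induction L generalizing p L' with
  | nil =>
    simp only [scan, Option.ite_none_right_eq_some, Option.some.injEq] at h
    simp [← h.2]
  | cons v L ih =>
    simp only [scan] at h
    split_ifs at h
    · simp [← Option.some.inj h]
    · simp [← Option.some.inj h]
    · obtain ⟨L'', hL'', rfl⟩ := Option.map_eq_some_iff.mp h
      simpa using ih hL''

lemma IsCubeChain.scan {n : ℕ} {p : V} {L L' : List V} (hL : IsCubeChain n p L)
    (h : scan n p L = some L') : IsCubeChain n p L' := by
  induction L generalizing p L' with
  | nil =>
    simp only [Delta.scan, Option.ite_none_right_eq_some, Option.some.injEq] at h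
    obtain ⟨hcube, rfl⟩ := h
    exact ⟨List.isChain_pair.mpr (slt_add_one p), by simpa using hcube⟩
  | cons v L ih =>
    obtain ⟨hpv, hvL⟩ := List.isChain_cons_cons.mp hL.1
    simp only [Delta.scan] at h
    split_ifs at h with h1 h2
    · obtain rfl := Option.some.inj h
      exact ⟨hL.1.sublist (List.Sublist.cons_cons p (List.sublist_cons_self v L)),
        fun u hu => hL.2 u (List.mem_cons_of_mem v hu)⟩
    · obtain rfl := Option.some.inj h
      refine ⟨List.isChain_cons_cons.mpr
        ⟨slt_add_one p, List.isChain_cons_cons.mpr ⟨h2, hvL⟩⟩, ?_⟩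
      rw [List.forall_mem_cons]
      exact ⟨add_one_mem_cube_iff.mpr ⟨v, hL.2 v List.mem_cons_self, hpv⟩, hL.2⟩
    · obtain ⟨L'', hL'', rfl⟩ := Option.map_eq_some_iff.mp h
      have ih' := ih hL.tail hL''
      refine ⟨List.isChain_cons_cons.mpr ⟨hpv, ih'.1⟩, ?_⟩
      rw [List.forall_mem_cons]
      exact ⟨hL.2 v List.mem_cons_self, ih'.2⟩

lemma scan_scan {n : ℕ} {p : V} {L L' : List V} (hL : IsCubeChain n p L)
    (h : scan n p L = some L') : scan n p L' = some L := by
  induction L generalizing p L' with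
  | nil =>
    simp only [scan, Option.ite_none_right_eq_some, Option.some.injEq] at h
    obtain ⟨-, rfl⟩ := h
    simp [scan]
  | cons v L ih =>
    obtain ⟨-, hvL⟩ := List.isChain_cons_cons.mp hL.1
    simp only [scan] at h
    split_ifs at h with h1 h2
    · obtain rfl := Option.some.inj h
      subst h1
      cases L with
      | nil => simp [scan, hL.2 _ List.mem_cons_self]
      | cons w L =>
        have hvw : slt (p + 1) w := (List.isChain_cons_cons.mp hvL).1
        simp [scan, hvw, (ne_of_slt hvw).symm]
    · obtain rfl := Option.some.inj h
      simp [scan]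
    · obtain ⟨L'', hL'', rfl⟩ := Option.map_eq_some_iff.mp h
      simp [scan, h1, h2, ih hL.tail hL'']

lemma sum_filter_isSome_scan_eq_zero (n : ℕ) :
    ∑ L ∈ (chains n).filter (fun L => (scan n 0 L).isSome), (-1 : ℤ) ^ L.length = 0 := by
  have hchain : ∀ L ∈ (chains n).filter (fun L => (scan n 0 L).isSome), IsCubeChain n 0 L :=
    fun L hL => isCubeChain_zero_iff.mpr (mem_filter.mp hL).1
  have hscan : ∀ L (hL : L ∈ (chains n).filter (fun L => (scan n 0 L).isSome)),
      scan n 0 L = some ((scan n 0 L).get (mem_filter.mp hL).2) :=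
    fun _ _ => (Option.some_get _).symm
  refine sum_involution (fun L hL => (scan n 0 L).get (mem_filter.mp hL).2) ?_ ?_ ?_ ?_
  · intro L hL
    rcases length_scan (hscan L hL) with h | h <;> rw [h, pow_succ] <;> ring
  · intro L hL _ heq
    rcases length_scan (hscan L hL) with h | h <;> rw [heq] at h <;> omega
  · intro L hL
    refine mem_filter.mpr ⟨isCubeChain_zero_iff.mp ((hchain L hL).scan (hscan L hL)), ?_⟩
    rw [scan_scan (hchain L hL) (hscan L hL)]
    rfl
  · intro L hL
    simp only [scan_scan (hchain L hL) (hscan L hL), Option.get_some]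

end Delta

open Classical in
/-- Euler–Poincaré for `Δ(n)`: the alternating sum of cubes of binomial coefficients
equals the signed count of the homology facets of `Δ(n)`. -/
theorem alternating_sum_eq_signed_homology_facets (n : ℕ) :
    (∑ s ∈ Finset.range (n + 1), (-1 : ℤ) ^ s * (n.choose s : ℤ) ^ 3) =
      ∑ F ∈ (Finset.Icc 1 n ×ˢ Finset.Icc 1 n ×ˢ Finset.Icc 1 n).powerset.filter
          (fun F => HomFacet n F), (-1 : ℤ) ^ F.card := by
  rw [show Icc 1 n ×ˢ Icc 1 n ×ˢ Icc 1 n = Delta.cube n from rfl,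
    Delta.sum_filter_powerset_cube_eq _ (fun F hF => hF.1.1), ← Delta.sum_chains_neg_one_pow,
    ← sum_filter_not_add_sum_filter _ (fun L => (Delta.scan n 0 L).isSome),
    Delta.sum_filter_isSome_scan_eq_zero, add_zero]
  refine sum_congr (filter_congr fun L hL => ?_) fun _ _ => rfl
  rw [Delta.homFacet_toFinset_iff hL, ← Delta.scan_eq_none_iff, Option.not_isSome_iff_eq_none]
end

section
/- Let P be the formal power series in three variables x, y, z over the rationals whose coefficient of x^a y^b z^c equals 1 if a, b, c are positive integers with min(a,b,c) = 1 and max(a,b,c) ≥ 2, and equals 0 otherwise. Then P · (1-x)(1-y)(1-z) = xyz·(1 - xyz) - xyz·(1-x)(1-y)(1-z) as formal power series, i.e., P = xyz·((1-xyz)/((1-x)(1-y)(1-z)) - 1). -/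
/-!
Let `A = ∑_d x^d` be the series of all monomials and `M = ∏ᵢ xᵢ`. Telescoping one variable at a
time gives `A · ∏ᵢ (1 - xᵢ) = 1`. An exponent `d` has minimum `1` and maximum `≥ 2` exactly when
`d ≥ 𝟙`, but neither `d ≥ 2·𝟙` nor `d = 𝟙`; hence `P = M A - M² A - M`, and multiplying by
`∏ᵢ (1 - xᵢ)` gives `P · ∏ᵢ (1 - xᵢ) = M (1 - M) - M · ∏ᵢ (1 - xᵢ)`.
-/

open MvPowerSeries Finsupp Finset

theorem ite_min_eq_one_max_ge_two_eq_sub {σ R : Type*} [Fintype σ] [Nonempty σ]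
    [AddGroupWithOne R] (d : σ → ℕ) :
    (if (∀ a, 1 ≤ d a) ∧ (∃ a, d a = 1) ∧ (∃ a, 2 ≤ d a) then (1 : R) else 0) =
      (if ∀ a, 1 ≤ d a then 1 else 0) - (if ∀ a, 2 ≤ d a then 1 else 0) -
        (if ∀ a, d a = 1 then 1 else 0) := by
  by_cases h1 : ∀ a, 1 ≤ d a
  · have h2 : (∀ a, 2 ≤ d a) ↔ ¬ ∃ a, d a = 1 := by
      refine ⟨fun h ⟨a, ha⟩ => by have := h a; omega, fun h a => ?_⟩
      have := h1 a; by_contra; exact h ⟨a, by omega⟩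
    have h3 : (∀ a, d a = 1) ↔ ¬ ∃ a, 2 ≤ d a := by
      refine ⟨fun h ⟨a, ha⟩ => by have := h a; omega, fun h a => ?_⟩
      have := h1 a; by_contra; exact h ⟨a, by omega⟩
    have h4 : (∃ a, d a = 1) ∨ ∃ a, 2 ≤ d a := by
      obtain ⟨a⟩ := ‹Nonempty σ›
      exact (Nat.lt_or_ge (d a) 2).imp (fun h => ⟨a, by have := h1 a; omega⟩) (⟨a, ·⟩)
    simp only [h1, h2, h3]
    by_cases e1 : ∃ a, d a = 1 <;> by_cases e2 : ∃ a, 2 ≤ d a <;> simp_all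
  · have h2 : ¬ ∀ a, 2 ≤ d a := fun h => h1 fun a => by have := h a; omega
    have h3 : ¬ ∀ a, d a = 1 := fun h => h1 fun a => by have := h a; omega
    simp [h1, h2, h3]

namespace MvPowerSeries

variable {σ R : Type*} [CommRing R]

open scoped Classical in
/-- The sum of all monomials in the variables of `s`, i.e. `∏ i ∈ s, (1 - X i)⁻¹`. -/
noncomputable def onesOn (s : Finset σ) : MvPowerSeries σ R :=
  fun d => if ∀ j ∉ s, d j = 0 then 1 else 0

open scoped Classical in
theorem coeff_onesOn (s : Finset σ) (d : σ →₀ ℕ) :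
    coeff d (onesOn s : MvPowerSeries σ R) = if ∀ j ∉ s, d j = 0 then 1 else 0 := rfl

theorem onesOn_empty : (onesOn ∅ : MvPowerSeries σ R) = 1 := by
  classical
  ext d
  simp [coeff_onesOn, coeff_one, Finsupp.ext_iff]

theorem onesOn_insert_mul_one_sub_X [DecidableEq σ] {i : σ} {s : Finset σ} (hi : i ∉ s) :
    (onesOn (insert i s) : MvPowerSeries σ R) * (1 - X i) = onesOn s := by
  ext d
  rw [mul_sub, mul_one, map_sub, X, coeff_mul_monomial, mul_one]
  simp only [coeff_onesOn, single_le_iff]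
  by_cases hd : 1 ≤ d i
  · have hs : ¬ ∀ j ∉ s, d j = 0 := fun h => by have := h i hi; omega
    have hsub : (∀ j ∉ insert i s, (d - single i 1 : σ →₀ ℕ) j = 0) ↔
        ∀ j ∉ insert i s, d j = 0 :=
      forall₂_congr fun j hj => by
        rw [tsub_apply, single_eq_of_ne (ne_of_mem_of_not_mem (mem_insert_self i s) hj).symm,
          tsub_zero]
    rw [if_pos hd, if_neg hs, hsub, sub_self]
  · have hins : (∀ j ∉ insert i s, d j = 0) ↔ ∀ j ∉ s, d j = 0 :=
      ⟨fun h j hj => by by_cases hji : j = i <;> simp_all, fun h j hj => h j (by simp_all)⟩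
    rw [if_neg hd, hins, sub_zero]

theorem onesOn_mul_prod_one_sub_X (s : Finset σ) :
    (onesOn s : MvPowerSeries σ R) * ∏ i ∈ s, (1 - X i) = 1 := by
  classical
  induction s using Finset.induction_on with
  | empty => rw [onesOn_empty, prod_empty, mul_one]
  | insert i s hi ih => rw [prod_insert hi, ← mul_assoc, onesOn_insert_mul_one_sub_X hi, ih]

theorem prod_X_eq_monomial (s : Finset σ) :
    ∏ i ∈ s, (X i : MvPowerSeries σ R) = monomial (∑ i ∈ s, single i 1) 1 := by
  classical
  induction s using Finset.induction_on with
  | empty => simp [monomial_zero_one]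
  | insert i s hi ih => rw [prod_insert hi, sum_insert hi, ih, X, monomial_mul_monomial, one_mul]

theorem coeff_monomial_one_mul_onesOn_univ [Fintype σ] (s d : σ →₀ ℕ) :
    coeff d (monomial s 1 * onesOn univ : MvPowerSeries σ R) = if s ≤ d then 1 else 0 := by
  rw [coeff_monomial_mul]
  split_ifs <;> simp [coeff_onesOn]

theorem mul_prod_one_sub_X_eq_of_coeff [Fintype σ] [Nonempty σ] (P : MvPowerSeries σ R)
    (hP : ∀ d : σ →₀ ℕ, coeff d P =
      if (∀ a, 1 ≤ d a) ∧ (∃ a, d a = 1) ∧ (∃ a, 2 ≤ d a) then 1 else 0) :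
    P * ∏ i, (1 - X i) = (∏ i, X i) * (1 - ∏ i, X i) - (∏ i, X i) * ∏ i, (1 - X i) := by
  classical
  set e : σ →₀ ℕ := ∑ i, single i 1 with he_def
  have he (a : σ) : e a = 1 := by rw [he_def, finsetSum_apply, univ_sum_single_apply']
  have hM : ∏ i, (X i : MvPowerSeries σ R) = monomial e 1 := prod_X_eq_monomial univ
  have hMM : monomial e 1 * monomial e 1 = (monomial (e + e) 1 : MvPowerSeries σ R) := by
    rw [monomial_mul_monomial, one_mul]
  have hP' : P = monomial e 1 * onesOn univ - monomial e 1 * monomial e 1 * onesOn univ -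
      monomial e 1 := by
    ext d
    rw [hP, map_sub, map_sub, hMM, coeff_monomial_one_mul_onesOn_univ,
      coeff_monomial_one_mul_onesOn_univ, coeff_monomial, ite_min_eq_one_max_ge_two_eq_sub]
    simp only [Finsupp.le_def, Finsupp.ext_iff, Finsupp.add_apply, he]
  rw [hM, hP']
  linear_combination (monomial e 1 - monomial e 1 * monomial e 1) *
    onesOn_mul_prod_one_sub_X (R := R) (univ : Finset σ)

end MvPowerSeries

/-- Lemma 7.6: the generating function `P` for triples `(a,b,c)` of positive integers
with `min(a,b,c) = 1` and `max(a,b,c) ≥ 2` satisfies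
`P = xyz·((1-xyz)/((1-x)(1-y)(1-z)) - 1)`, stated denominator-free. -/
theorem single_position_generating_function (P : MvPowerSeries (Fin 3) ℚ)
    (hP : ∀ d : Fin 3 →₀ ℕ,
      MvPowerSeries.coeff d P =
        if (∀ a : Fin 3, 1 ≤ d a) ∧ (∃ a : Fin 3, d a = 1) ∧ (∃ a : Fin 3, 2 ≤ d a)
        then 1 else 0) :
    P * ((1 - X 0) * (1 - X 1) * (1 - X 2)) =
      X 0 * X 1 * X 2 * (1 - X 0 * X 1 * X 2) -
        X 0 * X 1 * X 2 * ((1 - X 0) * (1 - X 1) * (1 - X 2)) := by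
  simpa only [Fin.prod_univ_three] using
    mul_prod_one_sub_X_eq_of_coeff P fun d => by convert hP d
end
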